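/- arXiv:1501.07459 — 7 statements merged into one kernel-verified Lean document; each statement's English description precedes it below -/
import Mathlib

section
/- For any x = (x_1, x') in ℝ^n with |x'| ≥ 1, the periodic kernel K(x) = Σ_{k∈ℤ} |x + k e_1|^{-(n+s)} satisfies K(x) ≤ C |x'|^{1-n-s} for some constant C > 0 depending only on n and s. -/
open MeasureTheory Set
open scoped ENNReal Classical

noncomputable section

abbrev V (d : ℕ) := ℝ × EuclideanSpace ℝ (Fin d)

/-- Euclidean norm on `ℝ × ℝ^{d}`. -/
def eNorm {d : ℕ} (x : V d) : ℝ := Real.sqrt (x.1 ^ 2 + ‖x.2‖ ^ 2)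

/-- The kernel `|x|^{-(n+s)}` (with value `∞` at the origin). -/
def ker (n : ℕ) (s : ℝ) {d : ℕ} (x : V d) : ℝ≥0∞ :=
  (ENNReal.ofReal (eNorm x)) ^ (-((n : ℝ) + s))

/-- The periodic kernel `K(x) = ∑_{k ∈ ℤ} |x + k e₁|^{-(n+s)}`. -/
def Kper (n : ℕ) (s : ℝ) {d : ℕ} (x : V d) : ℝ≥0∞ :=
  ∑' k : ℤ, ker n s (x.1 + (k : ℝ), x.2)

/-- The slab `S = [-1/2,1/2] × ℝ^{n-1}`. -/
def slab (d : ℕ) : Set (V d) := {x | x.1 ∈ Icc (-(1:ℝ)/2) (1/2)}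

/-- The periodic nonlocal perimeter `P_S`. -/
def PS (n : ℕ) (s : ℝ) {d : ℕ} (F : Set (V d)) : ℝ≥0∞ :=
  ∫⁻ x in F ∩ slab d, ∫⁻ y in slab d \ F, Kper n s (x - y)

/-- The fractional perimeter `Per_s`. -/
def Pers (n : ℕ) (s : ℝ) {d : ℕ} (F : Set (V d)) : ℝ≥0∞ :=
  ∫⁻ x in F, ∫⁻ y in Fᶜ, ker n s (x - y)

/-- Horizontal translation `E + τ e₁`. -/
def htrans {d : ℕ} (τ : ℝ) (E : Set (V d)) : Set (V d) :=
  (fun p : V d => (p.1 + τ, p.2)) '' E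

/-- Periodic extension `F_per = ⋃_{k ∈ ℤ} (F + k e₁)`. -/
def perext {d : ℕ} (F : Set (V d)) : Set (V d) := ⋃ k : ℤ, htrans (k : ℝ) F

/-- The boundary cross term `Π_S(F)`. -/
def PiS (n : ℕ) (s : ℝ) {d : ℕ} (F : Set (V d)) : ℝ≥0∞ :=
  ∫⁻ x in F ∩ {x : V d | x.1 ∈ Icc (1/4 : ℝ) (1/2)},
    ∫⁻ y in htrans (1:ℝ) F ∩ {y : V d | y.1 ∈ Icc (1/2 : ℝ) (3/4)}, ker n s (x - y)

/-- The class `𝒦` of cylindrically symmetric, horizontally even and decreasing subsets of `S`. -/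
def inK (n : ℕ) (F : Set (V (n-1))) : Prop :=
  ∃ f : ℝ → ℝ≥0∞, (∀ x : ℝ, f (-x) = f x) ∧ AntitoneOn f (Icc 0 (1/2)) ∧
    F = {x : V (n-1) | x.1 ∈ Icc (-(1:ℝ)/2) (1/2) ∧ ENNReal.ofReal ‖x.2‖ ≤ f x.1}

/-- Euclidean ball in `ℝ × ℝ^{d}`. -/
def eball {d : ℕ} (c : V d) (r : ℝ) : Set (V d) := {x | eNorm (x - c) ≤ r}

/-- Fraenkel asymmetry. -/
def fDef {d : ℕ} (E : Set (V d)) : ℝ :=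
  sInf {t : ℝ | ∃ (c : V d) (r : ℝ), 0 < r ∧ volume (eball c r) = volume E ∧
    t = (volume (symmDiff E (eball c r))).toReal / (volume E).toReal}

/-! Shift `x₁` into `[0, 1)` by periodicity. Then `|x₁ + k| ≥ j` with `k = j` or `k = -(j+1)`,
`j ∈ ℕ`, so `|x + k e₁| ≥ (j + |x'|) / 2` and both halves of the sum are bounded by
`2^β ∑_{j ≥ 0} (j + |x'|)^{-β}` with `β = n + s > 1`; the integral test bounds this
by `2^β (|x'|^{-β} + |x'|^{1-β} / (β - 1))`. -/

lemma tsum_add_rpow_neg_le {β R : ℝ} (hβ : 1 < β) (hR : 0 < R) :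
    Summable (fun j : ℕ => ((j : ℝ) + R) ^ (-β)) ∧
      ∑' j : ℕ, ((j : ℝ) + R) ^ (-β) ≤ R ^ (-β) + R ^ (1 - β) / (β - 1) := by
  set f : ℝ → ℝ := fun t => (t + R) ^ (-β)
  have anti : AntitoneOn f (Ici 0) := fun a ha b _ hab =>
    Real.rpow_le_rpow_of_nonpos (by rw [mem_Ici] at ha; linarith) (by linarith) (by linarith)
  have nonneg : ∀ t ∈ Ioi (0 : ℝ), 0 ≤ f t := fun t ht =>
    Real.rpow_nonneg (by rw [mem_Ioi] at ht; linarith) _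
  have integrable : IntegrableOn f (Ioi 0) :=
    integrableOn_add_rpow_Ioi_of_lt (by linarith) (by linarith)
  have integral : ∫ t in Ioi 0, f t = R ^ (1 - β) / (β - 1) := by
    have translate := (measurePreserving_add_right volume R).setIntegral_preimage_emb
      (measurableEmbedding_addRight R) (fun t => t ^ (-β)) (Ioi R)
    rw [preimage_add_const_Ioi, sub_self] at translate
    rw [translate, integral_Ioi_rpow_of_lt (by linarith) hR,
      show -β + 1 = -(β - 1) by ring, show 1 - β = -(β - 1) by ring]
    field_simp
  refine ⟨anti.summable_of_integrableOn_Ioi_zero integrable nonneg, ?_⟩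
  simpa [f, integral] using anti.tsum_le_integral integrable nonneg

lemma abs_add_norm_le_two_mul_eNorm {d : ℕ} (x : V d) : |x.1| + ‖x.2‖ ≤ 2 * eNorm x := by
  have h₁ : |x.1| ≤ eNorm x := by
    rw [← Real.sqrt_sq_eq_abs]
    exact Real.sqrt_le_sqrt (le_add_of_nonneg_right (sq_nonneg _))
  have h₂ : ‖x.2‖ ≤ eNorm x := by
    rw [← Real.sqrt_sq (norm_nonneg x.2)]
    exact Real.sqrt_le_sqrt (le_add_of_nonneg_left (sq_nonneg _))
  linarith

lemma ker_le_ofReal_rpow {n : ℕ} {s : ℝ} {d : ℕ} (hns : 0 ≤ (n : ℝ) + s) {x : V d} {r : ℝ}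
    (hr : 0 < r) (hrx : r ≤ eNorm x) : ker n s x ≤ ENNReal.ofReal (r ^ (-((n : ℝ) + s))) := by
  rw [ker, ENNReal.ofReal_rpow_of_pos (hr.trans_le hrx)]
  exact ENNReal.ofReal_le_ofReal (Real.rpow_le_rpow_of_nonpos hr hrx (neg_nonpos.mpr hns))

lemma Kper_eq_tsum_fract (n : ℕ) (s : ℝ) {d : ℕ} (x : V d) :
    Kper n s x = ∑' k : ℤ, ker n s (Int.fract x.1 + k, x.2) := by
  rw [Kper, ← (Equiv.addRight ⌊x.1⌋).tsum_eq (fun k : ℤ => ker n s (Int.fract x.1 + k, x.2))]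
  congr! 3 with k
  push_cast [Equiv.coe_addRight]
  congr 1
  linarith [Int.fract_add_floor x.1]

lemma tsum_ker_le {n : ℕ} {s : ℝ} {d : ℕ} (hns : 1 < (n : ℝ) + s)
    {y : EuclideanSpace ℝ (Fin d)} (hy : 1 ≤ ‖y‖) (u : ℕ → ℝ) (hu : ∀ j : ℕ, (j : ℝ) ≤ |u j|) :
    ∑' j : ℕ, ker n s (u j, y) ≤ ENNReal.ofReal
      (2 ^ ((n : ℝ) + s) * (((n : ℝ) + s) / ((n : ℝ) + s - 1)) * ‖y‖ ^ (1 - ((n : ℝ) + s))) := by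
  set β : ℝ := (n : ℝ) + s
  set R := ‖y‖
  have hR : 0 < R := by linarith
  have term_le (j : ℕ) : ker n s (u j, y) ≤ ENNReal.ofReal (2 ^ β * ((j : ℝ) + R) ^ (-β)) := by
    have hr : 0 < ((j : ℝ) + R) / 2 := by positivity
    have hrx : ((j : ℝ) + R) / 2 ≤ eNorm (u j, y) := by
      linarith [hu j, abs_add_norm_le_two_mul_eNorm (u j, y)]
    refine (ker_le_ofReal_rpow (by linarith) hr hrx).trans_eq ?_
    rw [Real.div_rpow (by positivity) zero_le_two, Real.rpow_neg zero_le_two, div_inv_eq_mul,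
      mul_comm]
  obtain ⟨summable, tsum_le⟩ := tsum_add_rpow_neg_le (by linarith : 1 < β) hR
  have rpow_le : R ^ (-β) ≤ R ^ (1 - β) := Real.rpow_le_rpow_of_exponent_le hy (by linarith)
  calc ∑' j : ℕ, ker n s (u j, y)
      ≤ ∑' j : ℕ, ENNReal.ofReal (2 ^ β * ((j : ℝ) + R) ^ (-β)) := ENNReal.tsum_le_tsum term_le
    _ = ENNReal.ofReal (2 ^ β * ∑' j : ℕ, ((j : ℝ) + R) ^ (-β)) := by
      rw [← ENNReal.ofReal_tsum_of_nonneg (fun j => by positivity) (summable.mul_left _),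
        tsum_mul_left]
    _ ≤ ENNReal.ofReal (2 ^ β * (β / (β - 1)) * R ^ (1 - β)) := by
      gcongr ENNReal.ofReal ?_
      calc 2 ^ β * ∑' j : ℕ, ((j : ℝ) + R) ^ (-β)
          ≤ 2 ^ β * (R ^ (1 - β) + R ^ (1 - β) / (β - 1)) := by gcongr; linarith
        _ = 2 ^ β * (β / (β - 1)) * R ^ (1 - β) := by
          field_simp [show β - 1 ≠ 0 by linarith]
          ring

theorem kernel_decay (n : ℕ) (hn : 2 ≤ n) (s : ℝ) (hs : s ∈ Set.Ioo (0:ℝ) 1) :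
    ∃ C > (0:ℝ), ∀ x : V (n-1), 1 ≤ ‖x.2‖ →
      Kper n s x ≤ ENNReal.ofReal (C * ‖x.2‖ ^ (1 - (n:ℝ) - s)) := by
  have hβ : 1 < (n : ℝ) + s := by linarith [hs.1, (Nat.ofNat_le_cast.mpr hn : (2 : ℝ) ≤ n)]
  have hA : 0 < 2 * (2 ^ ((n : ℝ) + s) * (((n : ℝ) + s) / ((n : ℝ) + s - 1))) := by
    have : 0 < (n : ℝ) + s - 1 := by linarith
    positivity
  refine ⟨_, hA, fun x hx => ?_⟩
  rw [Kper_eq_tsum_fract, tsum_of_nat_of_neg_add_one ENNReal.summable ENNReal.summable]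
  set t := Int.fract x.1
  have ht : 0 ≤ t ∧ t < 1 := ⟨Int.fract_nonneg x.1, Int.fract_lt_one x.1⟩
  have upper := tsum_ker_le hβ hx (fun j : ℕ => t + ((j : ℤ) : ℝ)) fun j => by
    push_cast; rw [abs_of_nonneg (by positivity)]; linarith
  have lower := tsum_ker_le hβ hx (fun j : ℕ => t + ((-(j + 1) : ℤ) : ℝ)) fun j => by
    push_cast; rw [abs_of_neg (by linarith)]; linarith
  refine (add_le_add upper lower).trans_eq ?_
  rw [← ENNReal.ofReal_add (by positivity) (by positivity), sub_sub]
  congr 1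
  ring
end
end

section
/- For any x_1 ∈ ℝ with |x'| ≥ 1, the sum over integers k with k ∉ (-3|x'| - x_1, 3|x'| - x_1) of |x_1 + k|^{-(n+s)} is bounded by C |x'|^{1-n-s}, for a constant C depending only on n and s. -/
open MeasureTheory Set
open scoped ENNReal Classical

noncomputable section

/-! Outside the window, the lattice points `x₁ + k` lie at distance at least `R = 3‖x'‖` from the
origin, and on each side they are spaced by `1`, so each one-sided sum is at most
`∑ⱼ (R + j)^{-p}` with `p = n + s ≥ 2`. For `t ≥ R` one has
`t^{-p} ≤ R^{2-p} t^{-2} ≤ R^{2-p} ((t - 1)⁻¹ - t⁻¹)`, so this sum telescopes to at most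
`R^{2-p} / (R - 1) ≤ 2 R^{1-p}`. -/

namespace TailSum

theorem rpow_neg_le_mul_inv_sub_inv {a t p : ℝ} (ha : 2 ≤ a) (hp : 2 ≤ p) (hat : a ≤ t) :
    t ^ (-p) ≤ a ^ (2 - p) * ((t - 1)⁻¹ - t⁻¹) := by
  have ht : 0 < t := by linarith
  have h2 : t ^ (2 - p) ≤ a ^ (2 - p) :=
    Real.rpow_le_rpow_of_nonpos (by linarith) hat (by linarith)
  have hsq : (t ^ 2)⁻¹ ≤ (t - 1)⁻¹ - t⁻¹ := by
    rw [inv_sub_inv (by linarith) ht.ne', sub_sub_cancel, one_div, sq]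
    exact inv_anti₀ (by nlinarith) (by nlinarith)
  calc t ^ (-p) = t ^ (2 - p) * (t ^ 2)⁻¹ := by
        rw [← Real.rpow_natCast, ← Real.rpow_neg ht.le, ← Real.rpow_add ht]; ring_nf
    _ ≤ a ^ (2 - p) * ((t - 1)⁻¹ - t⁻¹) := by gcongr

theorem sum_range_add_rpow_neg_le {a p : ℝ} (ha : 2 ≤ a) (hp : 2 ≤ p) (N : ℕ) :
    ∑ j ∈ Finset.range N, (a + j) ^ (-p) ≤ 2 * a ^ (1 - p) := by
  have ha0 : 0 < a := by linarith
  calc ∑ j ∈ Finset.range N, (a + j) ^ (-p)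
      ≤ ∑ j ∈ Finset.range N, a ^ (2 - p) * ((a - 1 + j)⁻¹ - (a - 1 + (j + 1 : ℕ))⁻¹) := by
        gcongr with j
        refine (rpow_neg_le_mul_inv_sub_inv ha hp (by simp)).trans_eq ?_
        push_cast
        ring_nf
    _ = a ^ (2 - p) * ((a - 1)⁻¹ - (a - 1 + N)⁻¹) := by
        rw [← Finset.mul_sum, Finset.sum_range_sub' (fun j : ℕ ↦ (a - 1 + j)⁻¹)]
        simp
    _ ≤ a ^ (2 - p) * (a - 1)⁻¹ := by
        gcongr
        exact sub_le_self _ (inv_nonneg.2 (add_nonneg (by linarith) N.cast_nonneg))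
    _ ≤ a ^ (2 - p) * (2 / a) := by
        gcongr
        rw [inv_le_comm₀ (by linarith) (by positivity), inv_div]
        linarith
    _ = 2 * a ^ (1 - p) := by
        rw [show 1 - p = 2 - p - 1 by ring, Real.rpow_sub_one ha0.ne']
        ring

theorem tsum_ofReal_add_rpow_neg_le {a p : ℝ} (ha : 2 ≤ a) (hp : 2 ≤ p) :
    ∑' j : ℕ, ENNReal.ofReal ((a + j) ^ (-p)) ≤ ENNReal.ofReal (2 * a ^ (1 - p)) := by
  refine ENNReal.tsum_le_of_sum_range_le fun N ↦ ?_
  rw [← ENNReal.ofReal_sum_of_nonneg fun j _ ↦ Real.rpow_nonneg (by positivity) _]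
  exact ENNReal.ofReal_le_ofReal (sum_range_add_rpow_neg_le ha hp N)

theorem tsum_int_ite_le_two_mul_rpow {y R p : ℝ} (hR : 2 ≤ R) (hp : 2 ≤ p) :
    ∑' k : ℤ, (if R ≤ y + k then ENNReal.ofReal (y + k) ^ (-p) else 0) ≤
      ENNReal.ofReal (2 * R ^ (1 - p)) := by
  set m := ⌈R - y⌉
  have hm : R ≤ y + m := by linarith [Int.le_ceil (R - y)]
  have hinj : Function.Injective fun j : ℕ ↦ m + j :=
    (add_right_injective m).comp Nat.cast_injective
  rw [← hinj.tsum_eq]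
  · refine (ENNReal.tsum_le_tsum fun j ↦ ?_).trans (tsum_ofReal_add_rpow_neg_le hR hp)
    have hj : R + j ≤ y + ((m + j : ℤ) : ℝ) := by push_cast; linarith
    split_ifs
    · rw [ENNReal.ofReal_rpow_of_pos (by linarith)]
      exact ENNReal.ofReal_le_ofReal (Real.rpow_le_rpow_of_nonpos (by linarith) hj (by linarith))
    · exact zero_le
  · intro k hk
    have hRk : R ≤ y + k := by
      by_contra h
      exact hk (if_neg h)
    have hk : m ≤ k := Int.ceil_le.2 (by linarith)
    exact ⟨(k - m).toNat, by simp [Int.toNat_of_nonneg (sub_nonneg.2 hk)]⟩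

theorem ite_mem_Ioo_le_add {y R p k : ℝ} (hR : 0 ≤ R) :
    (if k ∈ Ioo (-R - y) (R - y) then 0 else ENNReal.ofReal |y + k| ^ (-p)) ≤
      (if R ≤ y + k then ENNReal.ofReal (y + k) ^ (-p) else 0) +
        (if R ≤ -y + -k then ENNReal.ofReal (-y + -k) ^ (-p) else 0) := by
  by_cases hk : k ∈ Ioo (-R - y) (R - y)
  · simp [hk]
  rw [if_neg hk]
  rcases not_and_or.1 hk with hk | hk <;> rw [not_lt] at hk
  · rw [abs_of_nonpos (by linarith), neg_add, if_pos (show R ≤ -y + -k by linarith)]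
    exact le_add_self
  · rw [abs_of_nonneg (by linarith), if_pos (show R ≤ y + k by linarith)]
    exact le_self_add

theorem tsum_int_ite_abs_le_four_mul_rpow {y R p : ℝ} (hR : 2 ≤ R) (hp : 2 ≤ p) :
    ∑' k : ℤ, (if (k : ℝ) ∈ Ioo (-R - y) (R - y) then 0 else ENNReal.ofReal |y + k| ^ (-p)) ≤
      ENNReal.ofReal (4 * R ^ (1 - p)) := by
  have hleft : ∑' k : ℤ, (if R ≤ -y + -(k : ℝ) then ENNReal.ofReal (-y + -k) ^ (-p) else 0) ≤
      ENNReal.ofReal (2 * R ^ (1 - p)) := by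
    rw [← (Equiv.neg ℤ).tsum_eq]
    simpa using tsum_int_ite_le_two_mul_rpow (y := -y) hR hp
  calc _ ≤ _ := ENNReal.tsum_le_tsum fun k ↦ ite_mem_Ioo_le_add (by linarith)
    _ = _ := ENNReal.tsum_add
    _ ≤ ENNReal.ofReal (2 * R ^ (1 - p)) + ENNReal.ofReal (2 * R ^ (1 - p)) :=
        add_le_add (tsum_int_ite_le_two_mul_rpow hR hp) hleft
    _ = ENNReal.ofReal (4 * R ^ (1 - p)) := by
        rw [← ENNReal.ofReal_add (by positivity) (by positivity)]
        ring_nf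

end TailSum

theorem tail_sum_bound (n : ℕ) (hn : 2 ≤ n) (s : ℝ) (hs : s ∈ Set.Ioo (0:ℝ) 1) :
    ∃ C > (0:ℝ), ∀ (x₁ : ℝ) (x' : EuclideanSpace ℝ (Fin (n-1))), 1 ≤ ‖x'‖ →
      (∑' k : ℤ, if (k : ℝ) ∈ Set.Ioo (-3 * ‖x'‖ - x₁) (3 * ‖x'‖ - x₁) then 0
          else (ENNReal.ofReal |x₁ + (k : ℝ)|) ^ (-((n : ℝ) + s)))
        ≤ ENNReal.ofReal (C * ‖x'‖ ^ (1 - (n:ℝ) - s)) := by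
  have hp : 2 ≤ (n : ℝ) + s := by
    have : (2 : ℝ) ≤ n := by exact_mod_cast hn
    linarith [hs.1]
  refine ⟨4, by norm_num, fun x₁ x' hx' ↦ ?_⟩
  have hR : 2 ≤ 3 * ‖x'‖ := by linarith
  simp_rw [neg_mul]
  refine (TailSum.tsum_int_ite_abs_le_four_mul_rpow hR hp).trans (ENNReal.ofReal_le_ofReal ?_)
  rw [show 1 - (n : ℝ) - s = 1 - (n + s) by ring]
  gcongr 4 * ?_
  exact Real.rpow_le_rpow_of_nonpos (by linarith) (by linarith) (by linarith)
end
end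

section
/- For any M ∈ ℕ, the truncated kernel h_M(x) := min{M, K(x)} satisfies h_M(x) ≤ C_M min{1, |x'|^{1-n-s}} for all x ∈ ℝ^n, for some constant C_M > 0 possibly depending on M. -/
/-!
For `‖x'‖ < 1` the truncation alone gives `h_M ≤ M`. For `r = ‖x'‖ ≥ 1`, shift `x₁` into `[0, 1)`;
then the lattice points `x + k e₁` and `x - (k + 1) e₁` (`k ∈ ℕ`) lie at distance at least
`max k r ≥ (k + r) / 2`, and since `n + s ≥ 2`, `|z|^{-(n+s)} ≤ r^{2-n-s} |z|^{-2}` there. Summing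
`4 / (k + r)²` against the telescoping majorant `8 / (k + r) - 8 / (k + r + 1)` gives
`K(x) ≤ 16 r^{1-n-s}`.
-/

open MeasureTheory Set
open scoped ENNReal Classical

noncomputable section

lemma abs_fst_le_eNorm {d : ℕ} (x : V d) : |x.1| ≤ eNorm x :=
  Real.abs_le_sqrt (by nlinarith [sq_nonneg ‖x.2‖])

lemma norm_snd_le_eNorm {d : ℕ} (x : V d) : ‖x.2‖ ≤ eNorm x :=
  Real.le_sqrt_of_sq_le (by nlinarith [sq_nonneg x.1])

lemma tsum_int_le_two_mul_tsum_nat (f : ℝ → ℝ≥0∞) (g : ℕ → ℝ≥0∞)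
    (hfg : ∀ (a : ℝ) (m : ℕ), (m : ℝ) ≤ |a| → f a ≤ g m) (x : ℝ) :
    ∑' k : ℤ, f (x + k) ≤ 2 * ∑' m, g m := by
  have hshift : ∑' k : ℤ, f (x + k) = ∑' k : ℤ, f (Int.fract x + k) := by
    rw [← (Equiv.subRight ⌊x⌋).tsum_eq]
    congr! 2 with k
    rw [Equiv.subRight_apply, Int.cast_sub, Int.fract, add_sub, sub_add_eq_add_sub]
  have ht0 : 0 ≤ Int.fract x := Int.fract_nonneg x
  have ht1 : Int.fract x < 1 := Int.fract_lt_one x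
  rw [hshift, tsum_of_nat_of_neg_add_one ENNReal.summable ENNReal.summable, two_mul]
  gcongr with m m
  · exact hfg _ _ (by push_cast; rw [abs_of_nonneg (by positivity)]; linarith)
  · exact hfg _ _ (by push_cast; rw [abs_of_neg (by linarith)]; linarith)

lemma rpow_neg_le_of_le {d r m p : ℝ} (hm : 0 ≤ m) (hr : 0 < r) (hrd : r ≤ d)
    (hmd : m + r ≤ 2 * d) (hp : 2 ≤ p) : d ^ (-p) ≤ 4 * r ^ (2 - p) / (m + r) ^ 2 := by
  have hd : 0 < d := hr.trans_le hrd
  calc d ^ (-p) = d ^ (2 - p) * (d ^ 2)⁻¹ := by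
        rw [← Real.rpow_natCast, ← Real.rpow_neg hd.le, ← Real.rpow_add hd]
        congr 1
        push_cast
        ring
    _ ≤ r ^ (2 - p) * (4 / (m + r) ^ 2) := by
        refine mul_le_mul (Real.rpow_le_rpow_of_nonpos hr hrd (by linarith)) ?_ (by positivity)
          (by positivity)
        rw [inv_le_iff_one_le_mul₀ (by positivity), div_mul_eq_mul_div, one_le_div₀ (by positivity)]
        nlinarith
    _ = 4 * r ^ (2 - p) / (m + r) ^ 2 := by ring

lemma tsum_inv_add_sq_le {r : ℝ} (hr : 1 ≤ r) :
    ∑' m : ℕ, ENNReal.ofReal (((m : ℝ) + r) ^ 2)⁻¹ ≤ ENNReal.ofReal (2 / r) := by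
  refine ENNReal.tsum_le_of_sum_range_le fun N => ?_
  have hr0 : 0 < r := by linarith
  set c : ℕ → ℝ := fun m => 2 / ((m : ℝ) + r)
  have hstep : ∀ m : ℕ, (((m : ℝ) + r) ^ 2)⁻¹ ≤ c m - c (m + 1) := by
    intro m
    have ha : 1 ≤ (m : ℝ) + r := by linarith [m.cast_nonneg (α := ℝ)]
    have hc : c m - c (m + 1) = 2 / (((m : ℝ) + r) * ((m : ℝ) + r + 1)) := by
      simp only [c, Nat.cast_succ]
      field_simp
      ring
    -- `a + 1 ≤ 2a` once `a ≥ 1`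
    rw [hc, inv_eq_one_div, div_le_div_iff₀ (by positivity) (by positivity)]
    nlinarith
  rw [← ENNReal.ofReal_sum_of_nonneg fun m _ => by positivity]
  refine ENNReal.ofReal_le_ofReal ?_
  calc ∑ m ∈ Finset.range N, (((m : ℝ) + r) ^ 2)⁻¹
      ≤ ∑ m ∈ Finset.range N, (c m - c (m + 1)) := Finset.sum_le_sum fun m _ => hstep m
    _ = c 0 - c N := Finset.sum_range_sub' c N
    _ ≤ 2 / r := by simp only [c, Nat.cast_zero, zero_add]; linarith [show 0 ≤ c N by positivity]

lemma Kper_le_of_one_le_norm (n : ℕ) {s : ℝ} {d : ℕ} (hp : 2 ≤ (n : ℝ) + s) (x : V d)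
    (hr : 1 ≤ ‖x.2‖) : Kper n s x ≤ ENNReal.ofReal (16 * ‖x.2‖ ^ (1 - ((n : ℝ) + s))) := by
  set p : ℝ := (n : ℝ) + s
  set r : ℝ := ‖x.2‖
  have hr0 : 0 < r := by linarith
  have hterm : ∀ (a : ℝ) (m : ℕ), (m : ℝ) ≤ |a| → ker n s ((a, x.2) : V d)
      ≤ ENNReal.ofReal (4 * r ^ (2 - p)) * ENNReal.ofReal (((m : ℝ) + r) ^ 2)⁻¹ := by
    intro a m hm
    have hrd : r ≤ eNorm ((a, x.2) : V d) := norm_snd_le_eNorm ((a, x.2) : V d)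
    have hmd : (m : ℝ) + r ≤ 2 * eNorm ((a, x.2) : V d) := by
      linarith [abs_fst_le_eNorm ((a, x.2) : V d)]
    rw [ker, ENNReal.ofReal_rpow_of_pos (hr0.trans_le hrd), ← ENNReal.ofReal_mul (by positivity)]
    exact ENNReal.ofReal_le_ofReal (rpow_neg_le_of_le (by positivity) hr0 hrd hmd hp)
  calc Kper n s x
      ≤ 2 * ∑' m : ℕ, ENNReal.ofReal (4 * r ^ (2 - p)) * ENNReal.ofReal (((m : ℝ) + r) ^ 2)⁻¹ :=
        tsum_int_le_two_mul_tsum_nat (fun a => ker n s ((a, x.2) : V d)) _ hterm x.1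
    _ ≤ 2 * (ENNReal.ofReal (4 * r ^ (2 - p)) * ENNReal.ofReal (2 / r)) := by
        rw [ENNReal.tsum_mul_left]
        gcongr
        exact tsum_inv_add_sq_le hr
    _ = ENNReal.ofReal (16 * r ^ (1 - p)) := by
        rw [← ENNReal.ofReal_mul (by positivity), ← ENNReal.ofReal_ofNat 2,
          ← ENNReal.ofReal_mul zero_le_two, show 1 - p = 2 - p - 1 by ring,
          Real.rpow_sub_one hr0.ne']
        congr 1
        ring

theorem truncated_kernel_decay (n : ℕ) (hn : 2 ≤ n) (s : ℝ) (hs : s ∈ Set.Ioo (0:ℝ) 1)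
    (M : ℕ) :
    ∃ C > (0:ℝ), ∀ x : V (n-1),
      min (M : ℝ≥0∞) (Kper n s x)
        ≤ ENNReal.ofReal C * min 1 ((ENNReal.ofReal ‖x.2‖) ^ (1 - (n:ℝ) - s)) := by
  have hp : 2 ≤ (n : ℝ) + s := by
    have : (2 : ℝ) ≤ n := by exact_mod_cast hn
    linarith [hs.1]
  refine ⟨M + 16, by positivity, fun x => ?_⟩
  rcases le_or_gt 1 ‖x.2‖ with hr | hr
  · have hpow : ENNReal.ofReal ‖x.2‖ ^ (1 - (n : ℝ) - s) ≤ 1 :=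
      ENNReal.rpow_le_one_of_one_le_of_neg (ENNReal.one_le_ofReal.mpr hr) (by linarith)
    calc min (M : ℝ≥0∞) (Kper n s x) ≤ Kper n s x := min_le_right _ _
      _ ≤ ENNReal.ofReal (16 * ‖x.2‖ ^ (1 - ((n : ℝ) + s))) := Kper_le_of_one_le_norm n hp x hr
      _ = ENNReal.ofReal 16 * ENNReal.ofReal ‖x.2‖ ^ (1 - (n : ℝ) - s) := by
        rw [ENNReal.ofReal_mul (by norm_num), ENNReal.ofReal_rpow_of_pos (by linarith), sub_sub]
      _ ≤ ENNReal.ofReal (M + 16) * min 1 (ENNReal.ofReal ‖x.2‖ ^ (1 - (n : ℝ) - s)) := by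
        rw [min_eq_right hpow]
        gcongr
        linarith [M.cast_nonneg (α := ℝ)]
  · have hpow : 1 ≤ ENNReal.ofReal ‖x.2‖ ^ (1 - (n : ℝ) - s) := by
      rw [show 1 - (n : ℝ) - s = -((n : ℝ) + s - 1) by ring, ENNReal.rpow_neg, ENNReal.one_le_inv]
      exact ENNReal.rpow_le_one (ENNReal.ofReal_le_one.mpr hr.le) (by linarith)
    calc min (M : ℝ≥0∞) (Kper n s x) ≤ ENNReal.ofReal M := by
          rw [ENNReal.ofReal_natCast]; exact min_le_left _ _
      _ ≤ ENNReal.ofReal (M + 16) * min 1 (ENNReal.ofReal ‖x.2‖ ^ (1 - (n : ℝ) - s)) := by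
        rw [min_eq_left hpow, mul_one]
        exact ENNReal.ofReal_le_ofReal (by linarith)
end
end

section
/- Cylinders have finite periodic nonlocal perimeter: for any R > 0, with C := {(x_1, x') : |x'| ≤ R}, one has P_S(C ∩ S) < +∞. -/
open MeasureTheory Set
open scoped ENNReal Classical

noncomputable section

/-!
Periodising in the first variable turns the `y`-integral of `Kper (x - y)` over the part of the
slab outside the cylinder into the integral of `|x - y|^{-(n+s)}` over all `y` outside the
cylinder. For `|x'| < R` every such `y` has `|x - y| ≥ R - |x'|`, and by scaling the integral of
`|z|^{-(n+s)}` over `|z| ≥ δ` in `ℝ^n` is `C δ^{-s}`, with `C < ∞` because `n + s > n`. Finally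
`(R - |x'|)^{-s}` is integrable over the ball `|x'| < R` because `s < 1`.
-/

open Module Metric

lemma lintegral_Icc_tsum_comp_add_intCast {f : ℝ → ℝ≥0∞} (hf : Measurable f) (a : ℝ) :
    ∫⁻ t in Icc a (a + 1), ∑' k : ℤ, f (t + k) = ∫⁻ t, f t := by
  rw [← setLIntegral_congr Ioc_ae_eq_Icc,
    lintegral_tsum (f := fun (k : ℤ) t => f (t + k)) fun k =>
      (hf.comp (measurable_add_const _)).aemeasurable,
    ← setLIntegral_univ, ← iUnion_Ioc_add_intCast a,
    lintegral_iUnion (fun _ => measurableSet_Ioc) (pairwise_disjoint_Ioc_add_intCast a)]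
  refine tsum_congr fun k => ?_
  have hpre : (· + (k : ℝ)) ⁻¹' Ioc (a + k) (a + k + 1) = Ioc a (a + 1) := by
    simp [add_sub_right_comm]
  rw [← (measurePreserving_add_right volume (k : ℝ)).setLIntegral_comp_preimage
    measurableSet_Ioc hf, hpre]

lemma setLIntegral_Icc_prod_tsum_comp_add_intCast {F : Type*} [MeasurableSpace F]
    {ν : Measure F} [SFinite ν] {f : ℝ × F → ℝ≥0∞} (hf : Measurable f) (a : ℝ) (B : Set F) :
    ∫⁻ y in Icc a (a + 1) ×ˢ B, ∑' k : ℤ, f (y.1 + k, y.2) ∂volume.prod ν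
      = ∫⁻ y in univ ×ˢ B, f y ∂volume.prod ν := by
  have hper : Measurable fun y : ℝ × F => ∑' k : ℤ, f (y.1 + k, y.2) :=
    Measurable.tsum fun k => hf.comp ((measurable_fst.add_const _).prodMk measurable_snd)
  rw [← Measure.prod_restrict, ← Measure.prod_restrict, lintegral_prod_symm _ hper.aemeasurable,
    lintegral_prod_symm _ hf.aemeasurable, Measure.restrict_univ]
  exact lintegral_congr fun w =>
    lintegral_Icc_tsum_comp_add_intCast (hf.comp measurable_prodMk_right) a

lemma setLIntegral_prod_comp_snd {α β : Type*} [MeasurableSpace α] [MeasurableSpace β]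
    {μ : Measure α} {ν : Measure β} [SFinite μ] [SFinite ν] (A : Set α) (B : Set β)
    {g : β → ℝ≥0∞} (hg : Measurable g) :
    ∫⁻ x in A ×ˢ B, g x.2 ∂μ.prod ν = μ A * ∫⁻ y in B, g y ∂ν := by
  rw [← Measure.prod_restrict,
    lintegral_prod (fun x : α × β => g x.2) (hg.comp measurable_snd).aemeasurable]
  simp only [lintegral_const, Measure.restrict_apply_univ, mul_comm]

section AddHaar

variable {E : Type*} [NormedAddCommGroup E] [NormedSpace ℝ E] [MeasurableSpace E] [BorelSpace E]
  [FiniteDimensional ℝ E] (μ : Measure E) [μ.IsAddHaarMeasure]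

lemma lintegral_comp_inv_smul_of_pos {f : E → ℝ≥0∞} (hf : Measurable f) {δ : ℝ} (hδ : 0 < δ) :
    ∫⁻ z, f (δ⁻¹ • z) ∂μ = ENNReal.ofReal δ ^ (finrank ℝ E : ℝ) * ∫⁻ z, f z ∂μ := by
  rw [← lintegral_map hf (measurable_const_smul _),
    Measure.map_addHaar_smul μ (inv_ne_zero hδ.ne'), lintegral_smul_measure, inv_pow, inv_inv,
    abs_of_pos (by positivity), ENNReal.ofReal_rpow_of_pos hδ, Real.rpow_natCast, smul_eq_mul]

lemma setLIntegral_le_norm_enorm_rpow_eq (p : ℝ) {δ : ℝ} (hδ : 0 < δ) :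
    ∫⁻ z in {z | δ ≤ ‖z‖}, ‖z‖ₑ ^ (-p) ∂μ
      = ENNReal.ofReal δ ^ ((finrank ℝ E : ℝ) - p) * ∫⁻ z in {z | 1 ≤ ‖z‖}, ‖z‖ₑ ^ (-p) ∂μ := by
  have hmeas : ∀ c : ℝ, MeasurableSet {z : E | c ≤ ‖z‖} := fun c =>
    measurableSet_le measurable_const measurable_norm
  have hδ0 : ENNReal.ofReal δ ≠ 0 := by simpa using hδ
  have hscale : ∀ z : E, {z : E | 1 ≤ ‖z‖}.indicator (‖·‖ₑ ^ (-p)) (δ⁻¹ • z)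
      = ENNReal.ofReal δ ^ p * {z : E | δ ≤ ‖z‖}.indicator (‖·‖ₑ ^ (-p)) z := by
    intro z
    have hiff : 1 ≤ ‖δ⁻¹ • z‖ ↔ δ ≤ ‖z‖ := by
      rw [norm_smul, Real.norm_of_nonneg (inv_pos.2 hδ).le, ← div_eq_inv_mul, one_le_div hδ]
    by_cases hz : δ ≤ ‖z‖
    · rw [indicator_of_mem (s := {z : E | 1 ≤ ‖z‖}) (hiff.2 hz),
        indicator_of_mem (s := {z : E | δ ≤ ‖z‖}) hz, enorm_smul,
        ENNReal.mul_rpow_of_ne_top enorm_ne_top enorm_ne_top,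
        Real.enorm_of_nonneg (inv_pos.2 hδ).le, ENNReal.ofReal_inv_of_pos hδ, ENNReal.inv_rpow,
        ← ENNReal.rpow_neg, neg_neg]
    · rw [indicator_of_notMem (s := {z : E | 1 ≤ ‖z‖}) (mt hiff.1 hz),
        indicator_of_notMem (s := {z : E | δ ≤ ‖z‖}) hz, mul_zero]
  have key := lintegral_comp_inv_smul_of_pos μ
    ((measurable_enorm.pow_const (-p)).indicator (hmeas 1)) hδ
  simp_rw [hscale] at key
  rw [lintegral_const_mul _ ((measurable_enorm.pow_const (-p)).indicator (hmeas δ)),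
    lintegral_indicator (hmeas δ), lintegral_indicator (hmeas 1)] at key
  rw [sub_eq_add_neg, ENNReal.rpow_add _ _ hδ0 ENNReal.ofReal_ne_top, mul_comm (_ ^ _), mul_assoc,
    ← key, ← mul_assoc, ← ENNReal.rpow_add _ _ hδ0 ENNReal.ofReal_ne_top, neg_add_cancel,
    ENNReal.rpow_zero, one_mul]

lemma setLIntegral_one_le_norm_enorm_rpow_lt_top {p : ℝ} (hp : (finrank ℝ E : ℝ) < p) :
    ∫⁻ z in {z | 1 ≤ ‖z‖}, ‖z‖ₑ ^ (-p) ∂μ < ∞ := by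
  have hp0 : 0 ≤ p := (Nat.cast_nonneg _).trans hp.le
  have hbound : ∀ z : E, 1 ≤ ‖z‖ →
      ‖z‖ₑ ^ (-p) ≤ ENNReal.ofReal (2 ^ p) * ENNReal.ofReal ((1 + ‖z‖) ^ (-p)) := by
    intro z hz
    have hz0 : 0 < ‖z‖ := one_pos.trans_le hz
    have hle : (2 * ‖z‖) ^ (-p) ≤ (1 + ‖z‖) ^ (-p) :=
      Real.rpow_le_rpow_of_nonpos (by positivity) (by linarith) (neg_nonpos.2 hp0)
    rw [Real.mul_rpow zero_le_two hz0.le, Real.rpow_neg zero_le_two] at hle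
    rw [← ofReal_norm, ENNReal.ofReal_rpow_of_pos hz0, ← ENNReal.ofReal_mul (by positivity)]
    refine ENNReal.ofReal_le_ofReal ?_
    calc ‖z‖ ^ (-p) = 2 ^ p * ((2 ^ p)⁻¹ * ‖z‖ ^ (-p)) := by
          rw [mul_inv_cancel_left₀ (by positivity)]
      _ ≤ 2 ^ p * (1 + ‖z‖) ^ (-p) := by gcongr
  calc ∫⁻ z in {z | 1 ≤ ‖z‖}, ‖z‖ₑ ^ (-p) ∂μ
      ≤ ∫⁻ z in {z | 1 ≤ ‖z‖}, ENNReal.ofReal (2 ^ p) * ENNReal.ofReal ((1 + ‖z‖) ^ (-p)) ∂μ :=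
        setLIntegral_mono (by fun_prop) hbound
    _ ≤ ∫⁻ z, ENNReal.ofReal (2 ^ p) * ENNReal.ofReal ((1 + ‖z‖) ^ (-p)) ∂μ :=
        setLIntegral_le_lintegral _ _
    _ = ENNReal.ofReal (2 ^ p) * ∫⁻ z, ENNReal.ofReal ((1 + ‖z‖) ^ (-p)) ∂μ :=
        lintegral_const_mul' _ _ ENNReal.ofReal_ne_top
    _ < ∞ := ENNReal.mul_lt_top ENNReal.ofReal_lt_top (finite_integral_one_add_norm hp)

variable [Nontrivial E]

lemma closedBall_ae_eq_ball (x : E) (r : ℝ) : closedBall x r =ᵐ[μ] ball x r := by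
  rw [← ball_union_sphere]
  exact union_ae_eq_left_of_ae_eq_empty (ae_eq_empty.2 (Measure.addHaar_sphere μ x r))

lemma setLIntegral_ball_sub_norm_rpow_lt_top {σ : ℝ} (hσ : σ < 1) {R : ℝ} (hR : 0 < R) :
    ∫⁻ u in ball (0 : E) R, ENNReal.ofReal (R - ‖u‖) ^ (-σ) ∂μ < ∞ := by
  have hradial : IntervalIntegrable (fun r : ℝ => r ^ (finrank ℝ E - 1) * (R - r) ^ (-σ))
      volume 0 R := by
    have h := (intervalIntegral.intervalIntegrable_rpow' (a := R) (b := 0) (r := -σ)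
      (by linarith)).comp_sub_left R
    simp only [sub_self, sub_zero] at h
    exact h.continuousOn_mul (continuous_pow _).continuousOn
  have hint : IntegrableOn (fun u : E => (R - ‖u‖) ^ (-σ)) (ball 0 R) μ := by
    rw [integrableOn_fun_norm_addHaar μ (f := fun r => (R - r) ^ (-σ)),
      ← intervalIntegrable_iff_integrableOn_Ioo_of_le hR.le]
    simpa only [smul_eq_mul] using hradial
  calc ∫⁻ u in ball (0 : E) R, ENNReal.ofReal (R - ‖u‖) ^ (-σ) ∂μ
      = ∫⁻ u in ball (0 : E) R, ENNReal.ofReal ((R - ‖u‖) ^ (-σ)) ∂μ :=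
        setLIntegral_congr_fun measurableSet_ball fun u hu =>
          ENNReal.ofReal_rpow_of_pos (sub_pos.2 (mem_ball_zero_iff.1 hu))
    _ < ∞ := hint.lintegral_lt_top

end AddHaar

-- `volume` on a product is the product measure only up to unfolding, which instance search
-- does not do.
instance (d : ℕ) : (volume : Measure (V d)).IsAddHaarMeasure := by
  rw [Measure.volume_eq_prod]; infer_instance

lemma continuous_eNorm (d : ℕ) : Continuous (eNorm (d := d)) := by
  unfold eNorm; fun_prop

lemma measurable_ker (n : ℕ) (s : ℝ) (d : ℕ) : Measurable (ker n s (d := d)) :=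
  ((continuous_eNorm d).measurable.ennreal_ofReal).pow_const _

-- `‖z‖` is the sup norm of `ℝ × ℝ^d`, `eNorm z` the Euclidean one.
lemma norm_le_eNorm {d : ℕ} (z : V d) : ‖z‖ ≤ eNorm z := by
  rw [Prod.norm_def, eNorm]
  refine max_le ?_ ?_ <;> refine Real.le_sqrt_of_sq_le ?_
  · rw [Real.norm_eq_abs, sq_abs]; nlinarith [sq_nonneg ‖z.2‖]
  · nlinarith [sq_nonneg z.1]

lemma ker_le_enorm_rpow {n : ℕ} {s : ℝ} (hns : 0 ≤ (n : ℝ) + s) {d : ℕ} (z : V d) :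
    ker n s z ≤ ‖z‖ₑ ^ (-((n : ℝ) + s)) := by
  rw [ker, ← ofReal_norm, ENNReal.rpow_neg, ENNReal.rpow_neg]
  exact ENNReal.inv_le_inv.2
    (ENNReal.rpow_le_rpow (ENNReal.ofReal_le_ofReal (norm_le_eNorm z)) hns)

lemma Kper_sub_eq_tsum (n : ℕ) (s : ℝ) {d : ℕ} (x y : V d) :
    Kper n s (x - y) = ∑' k : ℤ, ker n s (x - (y.1 + k, y.2)) := by
  rw [Kper, ← (Equiv.neg ℤ).tsum_eq]
  refine tsum_congr fun k => congrArg (ker n s) (Prod.ext ?_ rfl)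
  simp only [Equiv.neg_apply, Int.cast_neg, Prod.fst_sub]
  ring

lemma setLIntegral_Kper_sub_eq (n : ℕ) (s : ℝ) {d : ℕ} (x : V d)
    (B : Set (EuclideanSpace ℝ (Fin d))) :
    ∫⁻ y in Icc (-(1:ℝ)/2) (1/2) ×ˢ B, Kper n s (x - y)
      = ∫⁻ y in univ ×ˢ B, ker n s (x - y) := by
  simp_rw [Kper_sub_eq_tsum, show (1/2 : ℝ) = -(1:ℝ)/2 + 1 by norm_num]
  exact setLIntegral_Icc_prod_tsum_comp_add_intCast
    ((measurable_ker n s d).comp (measurable_const.sub measurable_id)) _ B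

lemma setLIntegral_Kper_sub_le {n : ℕ} {s : ℝ} (hns : 0 ≤ (n : ℝ) + s) {d : ℕ} {R : ℝ}
    {x : V d} (hx : ‖x.2‖ < R) :
    ∫⁻ y in Icc (-(1:ℝ)/2) (1/2) ×ˢ {w | R < ‖w‖}, Kper n s (x - y)
      ≤ ENNReal.ofReal (R - ‖x.2‖) ^ ((d : ℝ) + 1 - ((n : ℝ) + s)) *
        ∫⁻ z in {z : V d | 1 ≤ ‖z‖}, ‖z‖ₑ ^ (-((n : ℝ) + s)) := by
  set p : ℝ := n + s
  set δ := R - ‖x.2‖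
  have hfar : univ ×ˢ {w | R < ‖w‖} ⊆ {y : V d | δ ≤ ‖y - x‖} := fun y hy => by
    have h₁ := norm_sub_norm_le y.2 x.2
    have h₂ : ‖y.2 - x.2‖ ≤ ‖y - x‖ := norm_snd_le (y - x)
    have h₃ : R < ‖y.2‖ := hy.2
    show δ ≤ ‖y - x‖
    linarith
  have hdim : (finrank ℝ (V d) : ℝ) = d + 1 := by simp [add_comm]
  calc ∫⁻ y in Icc (-(1:ℝ)/2) (1/2) ×ˢ {w | R < ‖w‖}, Kper n s (x - y)
      = ∫⁻ y in univ ×ˢ {w | R < ‖w‖}, ker n s (x - y) := setLIntegral_Kper_sub_eq n s x _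
    _ ≤ ∫⁻ y in {y : V d | δ ≤ ‖y - x‖}, ‖y - x‖ₑ ^ (-p) :=
        (lintegral_mono_set hfar).trans <| lintegral_mono fun y => by
          rw [← enorm_neg, neg_sub]; exact ker_le_enorm_rpow hns _
    _ = ∫⁻ z in {z : V d | δ ≤ ‖z‖}, ‖z‖ₑ ^ (-p) :=
        (measurePreserving_sub_right volume x).setLIntegral_comp_preimage
          (measurableSet_le measurable_const measurable_norm) (measurable_enorm.pow_const _)
    _ = ENNReal.ofReal δ ^ ((d : ℝ) + 1 - p) * ∫⁻ z in {z : V d | 1 ≤ ‖z‖}, ‖z‖ₑ ^ (-p) := by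
        rw [setLIntegral_le_norm_enorm_rpow_eq volume p (sub_pos.2 hx), hdim]

lemma cylinder_inter_slab_inter_slab_ae_eq {d : ℕ} (hd : d ≠ 0) (R : ℝ) :
    (({x : V d | ‖x.2‖ ≤ R} ∩ slab d) ∩ slab d : Set (V d))
      =ᵐ[volume] Icc (-(1:ℝ)/2) (1/2) ×ˢ ball 0 R := by
  have : Nonempty (Fin d) := ⟨⟨0, Nat.pos_of_ne_zero hd⟩⟩
  have hcyl : ({x : V d | ‖x.2‖ ≤ R} ∩ slab d) ∩ slab d
      = Icc (-(1:ℝ)/2) (1/2) ×ˢ closedBall 0 R := by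
    ext ⟨a, w⟩
    simp [slab, and_comm]
  rw [hcyl, Measure.volume_eq_prod]
  exact Measure.set_prod_ae_eq ae_eq_rfl (closedBall_ae_eq_ball _ 0 R)

lemma slab_diff_cylinder_inter_slab (d : ℕ) (R : ℝ) :
    slab d \ ({x : V d | ‖x.2‖ ≤ R} ∩ slab d) = Icc (-(1:ℝ)/2) (1/2) ×ˢ {w | R < ‖w‖} := by
  ext ⟨a, w⟩
  simp [slab]

theorem cylinder_finite_energy (n : ℕ) (hn : 2 ≤ n) (s : ℝ) (hs : s ∈ Set.Ioo (0:ℝ) 1)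
    (R : ℝ) (hR : 0 < R) :
    PS n s ({x : V (n-1) | ‖x.2‖ ≤ R} ∩ slab (n-1)) < ⊤ := by
  obtain ⟨hs0, hs1⟩ := hs
  set d := n - 1
  have hexp : (d : ℝ) + 1 - ((n : ℝ) + s) = -s := by
    rw [Nat.cast_sub (by omega : 1 ≤ n)]; ring
  have : Nonempty (Fin d) := ⟨⟨0, by omega⟩⟩
  set T := ∫⁻ z in {z : V d | 1 ≤ ‖z‖}, ‖z‖ₑ ^ (-((n : ℝ) + s))
  have hT : T < ∞ := setLIntegral_one_le_norm_enorm_rpow_lt_top volume (by simp; linarith)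
  rw [PS, slab_diff_cylinder_inter_slab,
    setLIntegral_congr (cylinder_inter_slab_inter_slab_ae_eq (by omega) R)]
  calc _ ≤ ∫⁻ x : V d in Icc (-(1:ℝ)/2) (1/2) ×ˢ ball 0 R,
        ENNReal.ofReal (R - ‖x.2‖) ^ (-s) * T :=
        setLIntegral_mono (by fun_prop) fun x hx => hexp ▸
          setLIntegral_Kper_sub_le (by positivity) (mem_ball_zero_iff.1 hx.2)
    _ = (∫⁻ u in ball (0 : EuclideanSpace ℝ (Fin d)) R, ENNReal.ofReal (R - ‖u‖) ^ (-s)) * T := by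
        rw [Measure.volume_eq_prod, setLIntegral_prod_comp_snd _ _
          (g := fun u => ENNReal.ofReal (R - ‖u‖) ^ (-s) * T) (by fun_prop), Real.volume_Icc,
          lintegral_mul_const _ (by fun_prop)]
        norm_num
    _ < ∞ := ENNReal.mul_lt_top (setLIntegral_ball_sub_norm_rpow_lt_top volume hs1 hR) hT
end
end

section
/- For the thin cylinder C := {(x_1, x') ∈ S : |x'| ≤ r} with r ∈ (0, 1/4), the cross term satisfies Π_S(C) ≤ C r^{n-s}, where Π_S(C) = ∫_{1/4}^{1/2} dx_1 ∫_{1/2}^{3/4} dy_1 ∫_{|x'|≤r} ∫_{|y'|≤r} |x-y|^{-(n+s)} dx' dy', for a constant C depending only on n, s. -/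
open MeasureTheory Set
open scoped ENNReal Classical

noncomputable section

/-!
For `x` and `y` in the two strips, `|x - y| ≥ max (y₁ - x₁) |x' - y'|`. With `p = n + s`, the
horizontal integrals over the half-lines `x₁ ≤ 1/2 ≤ y₁` then contribute at most
`C |x' - y'| ^ (2 - p)`. The remaining integral of `|x' - y'| ^ (-(p - 2))` over two balls of
radius `r` in `ℝ^{n-1}` converges because `p - 2 < n - 1`, and by scaling it is at most
`|B_r| (2r) ^ (1 - s)` times a constant, that is `C r ^ (n - s)`.
-/

open Metric

namespace ENNReal

lemma rpow_neg_le_rpow_neg {a b : ℝ≥0∞} (h : a ≤ b) {q : ℝ} (hq : 0 ≤ q) :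
    b ^ (-q) ≤ a ^ (-q) := by
  rw [rpow_neg, rpow_neg]
  exact ENNReal.inv_le_inv.mpr (rpow_le_rpow h hq)

lemma mul_ofReal_le_ofReal_toReal_add_one_mul {K : ℝ≥0∞} (hK : K ≠ ⊤) (x : ℝ) :
    K * ENNReal.ofReal x ≤ ENNReal.ofReal ((K.toReal + 1) * x) := by
  rw [ofReal_mul (by positivity)]
  gcongr
  calc K = ENNReal.ofReal K.toReal := (ofReal_toReal hK).symm
    _ ≤ _ := ofReal_le_ofReal (by linarith)

end ENNReal

lemma lintegral_Ioi_rpow_neg {q : ℝ} (hq : 1 < q) {c : ℝ} (hc : 0 < c) :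
    ∫⁻ t in Ioi c, ENNReal.ofReal t ^ (-q) = ENNReal.ofReal (c ^ (1 - q) / (q - 1)) := by
  have hpos : ∀ t ∈ Ioi c, 0 < t := fun t ht => hc.trans ht
  rw [setLIntegral_congr_fun measurableSet_Ioi fun t ht => ENNReal.ofReal_rpow_of_pos (hpos t ht),
    ← ofReal_integral_eq_lintegral_ofReal (integrableOn_Ioi_rpow_of_lt (by linarith) hc)
      ((ae_restrict_iff' measurableSet_Ioi).mpr (.of_forall fun t ht =>
        Real.rpow_nonneg (hpos t ht).le _)),
    integral_Ioi_rpow_of_lt (by linarith) hc]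
  congr 1
  rw [show -q + 1 = -(q - 1) by ring, div_neg, neg_div, neg_neg, neg_sub]

lemma lintegral_Ici_zero_max_rpow_neg {q : ℝ} (hq : 1 < q) {m : ℝ} (hm : 0 < m) :
    ∫⁻ t in Ici 0, ENNReal.ofReal (max t m) ^ (-q)
      = ENNReal.ofReal (q / (q - 1) * m ^ (1 - q)) := by
  rw [← Icc_union_Ioi_eq_Ici hm.le, lintegral_union measurableSet_Ioi
      (Set.disjoint_left.mpr fun t ht ht' => not_lt.mpr ht.2 ht'),
    setLIntegral_congr_fun measurableSet_Icc fun t ht => by rw [max_eq_right ht.2],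
    setLIntegral_congr_fun measurableSet_Ioi fun t ht => by rw [max_eq_left (le_of_lt ht)],
    setLIntegral_const, Real.volume_Icc, lintegral_Ioi_rpow_neg hq hm,
    ENNReal.ofReal_rpow_of_pos hm, ← ENNReal.ofReal_mul (by positivity),
    ← ENNReal.ofReal_add (by positivity) (div_nonneg (by positivity) (by linarith))]
  congr 1
  have hq1 : q - 1 ≠ 0 := by linarith
  rw [show 1 - q = -q + 1 by ring, Real.rpow_add_one hm.ne', sub_zero]
  field_simp
  ring

lemma lintegral_Ici_max_rpow_neg_le {q : ℝ} (hq : 1 < q) {ρ b : ℝ} (hρ : 0 < ρ) (hb : 0 ≤ b) :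
    ∫⁻ t in Ici b, ENNReal.ofReal (max t ρ) ^ (-q)
      ≤ ENNReal.ofReal (q / (q - 1) * max b ρ ^ (1 - q)) := by
  calc ∫⁻ t in Ici b, ENNReal.ofReal (max t ρ) ^ (-q)
      = ∫⁻ t in Ici b, ENNReal.ofReal (max t (max b ρ)) ^ (-q) :=
        setLIntegral_congr_fun measurableSet_Ici fun t (ht : b ≤ t) => by
          rw [← max_assoc, max_eq_left ht]
    _ ≤ ∫⁻ t in Ici 0, ENNReal.ofReal (max t (max b ρ)) ^ (-q) :=
        lintegral_mono_set (Ici_subset_Ici.mpr hb)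
    _ = _ := lintegral_Ici_zero_max_rpow_neg hq (lt_max_of_lt_right hρ)

lemma lintegral_Ici_comp_sub_right (f : ℝ → ℝ≥0∞) (c x : ℝ) :
    ∫⁻ y in Ici c, f (y - x) = ∫⁻ t in Ici (c - x), f t := by
  have h := (measurePreserving_sub_right volume x).setLIntegral_comp_preimage_emb
    (MeasurableEquiv.subRight x).measurableEmbedding f (Ici (c - x))
  rwa [preimage_sub_const_Ici, sub_add_cancel] at h

lemma lintegral_Iic_comp_sub_left (f : ℝ → ℝ≥0∞) (c : ℝ) :
    ∫⁻ x in Iic c, f (c - x) = ∫⁻ u in Ici 0, f u := by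
  have h := (Measure.measurePreserving_sub_left volume c).setLIntegral_comp_preimage_emb
    (MeasurableEquiv.subLeft c).measurableEmbedding f (Ici 0)
  rwa [preimage_const_sub_Ici, sub_zero] at h

lemma lintegral_Iic_lintegral_Ici_max_rpow_neg_le {p : ℝ} (hp : 2 < p) {ρ : ℝ} (hρ : 0 ≤ ρ)
    (c : ℝ) :
    ∫⁻ x in Iic c, ∫⁻ y in Ici c, ENNReal.ofReal (max (y - x) ρ) ^ (-p)
      ≤ ENNReal.ofReal (p / (p - 2)) * ENNReal.ofReal ρ ^ (-(p - 2)) := by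
  have hp1 : 0 < p / (p - 1) := div_pos (by linarith) (by linarith)
  rcases hρ.eq_or_lt with rfl | hρ
  · rw [ENNReal.ofReal_zero, ENNReal.zero_rpow_of_neg (by linarith),
      ENNReal.mul_top (ENNReal.ofReal_pos.mpr (div_pos (by linarith) (by linarith))).ne']
    exact le_top
  have inner : ∀ x ∈ Iic c, ∫⁻ y in Ici c, ENNReal.ofReal (max (y - x) ρ) ^ (-p)
      ≤ ENNReal.ofReal (p / (p - 1)) * ENNReal.ofReal (max (c - x) ρ) ^ (-(p - 1)) := fun x hx => by
    rw [lintegral_Ici_comp_sub_right (fun t => ENNReal.ofReal (max t ρ) ^ (-p)),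
      ENNReal.ofReal_rpow_of_pos (lt_max_of_lt_right hρ), ← ENNReal.ofReal_mul hp1.le,
      neg_sub]
    exact lintegral_Ici_max_rpow_neg_le (by linarith) hρ (sub_nonneg.mpr hx)
  calc ∫⁻ x in Iic c, ∫⁻ y in Ici c, ENNReal.ofReal (max (y - x) ρ) ^ (-p)
      ≤ ∫⁻ x in Iic c, ENNReal.ofReal (p / (p - 1))
          * ENNReal.ofReal (max (c - x) ρ) ^ (-(p - 1)) :=
        setLIntegral_mono' measurableSet_Iic inner
    _ = ENNReal.ofReal (p / (p - 1)) * ∫⁻ u in Ici 0, ENNReal.ofReal (max u ρ) ^ (-(p - 1)) := by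
        rw [lintegral_const_mul' _ _ ENNReal.ofReal_ne_top,
          lintegral_Iic_comp_sub_left (fun u => ENNReal.ofReal (max u ρ) ^ (-(p - 1)))]
    _ = ENNReal.ofReal (p / (p - 2)) * ENNReal.ofReal ρ ^ (-(p - 2)) := by
        rw [lintegral_Ici_zero_max_rpow_neg (by linarith) hρ, ← ENNReal.ofReal_mul hp1.le,
          ENNReal.ofReal_rpow_of_pos hρ, ← ENNReal.ofReal_mul (by positivity)]
        congr 1
        have h1 : p - 1 ≠ 0 := by linarith
        have h2 : p - 2 ≠ 0 := by linarith
        rw [show p - 1 - 1 = p - 2 by ring, show 1 - (p - 1) = -(p - 2) by ring]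
        field_simp

lemma lintegral_prod_lintegral_prod_eq {α β : Type*} [MeasurableSpace α] [MeasurableSpace β]
    {μ₁ μ₂ : Measure α} {ν₁ ν₂ : Measure β} [SFinite μ₁] [SFinite μ₂] [SFinite ν₁] [SFinite ν₂]
    {f : α × β → α × β → ℝ≥0∞} (hf : Measurable (Function.uncurry f)) :
    ∫⁻ x, ∫⁻ y, f x y ∂(μ₂.prod ν₂) ∂(μ₁.prod ν₁)
      = ∫⁻ x₂, ∫⁻ y₂, ∫⁻ x₁, ∫⁻ y₁, f (x₁, x₂) (y₁, y₂) ∂μ₂ ∂μ₁ ∂ν₂ ∂ν₁ := by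
  have inner : ∀ x, ∫⁻ y, f x y ∂(μ₂.prod ν₂) = ∫⁻ y₂, ∫⁻ y₁, f x (y₁, y₂) ∂μ₂ ∂ν₂ := fun x =>
    lintegral_prod_symm _ (hf.comp measurable_prodMk_left).aemeasurable
  simp_rw [inner]
  rw [lintegral_prod_symm _ (by fun_prop)]
  exact lintegral_congr fun x₂ => lintegral_lintegral_swap (by fun_prop)

lemma setLIntegral_closedBall_comp_sub_le {E : Type*} [NormedAddCommGroup E] [MeasurableSpace E]
    [BorelSpace E] {μ : Measure E} [μ.IsAddLeftInvariant] [μ.IsNegInvariant] (f : E → ℝ≥0∞)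
    {r : ℝ} {x : E} (hx : ‖x‖ ≤ r) :
    ∫⁻ y in closedBall 0 r, f (x - y) ∂μ ≤ ∫⁻ z in closedBall 0 (2 * r), f z ∂μ := by
  have hmem : ∀ y ∈ closedBall (0 : E) r, x - y ∈ closedBall (0 : E) (2 * r) := fun y hy => by
    rw [mem_closedBall_zero_iff] at hy ⊢
    linarith [norm_sub_le x y]
  calc ∫⁻ y in closedBall 0 r, f (x - y) ∂μ
      = ∫⁻ y in closedBall 0 r, (closedBall 0 (2 * r)).indicator f (x - y) ∂μ :=
        setLIntegral_congr_fun measurableSet_closedBall fun y hy =>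
          (indicator_of_mem (hmem y hy) f).symm
    _ ≤ ∫⁻ y, (closedBall 0 (2 * r)).indicator f (x - y) ∂μ := setLIntegral_le_lintegral _ _
    _ = ∫⁻ z in closedBall 0 (2 * r), f z ∂μ := by
        rw [lintegral_sub_left_eq_self, lintegral_indicator measurableSet_closedBall]

section SingularBall

variable {E : Type*} [NormedAddCommGroup E] [NormedSpace ℝ E] [FiniteDimensional ℝ E]
  [MeasurableSpace E] [BorelSpace E] (μ : Measure E) [μ.IsAddHaarMeasure]

lemma lintegral_closedBall_norm_rpow_neg_lt_top [Nontrivial E] {α : ℝ}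
    (hα : α < Module.finrank ℝ E) (R : ℝ) :
    ∫⁻ z in closedBall (0 : E) R, ENNReal.ofReal ‖z‖ ^ (-α) ∂μ < ⊤ := by
  set R' := |R| + 1
  have hR' : 0 < R' := by positivity
  have hdim : 1 ≤ Module.finrank ℝ E := Module.finrank_pos
  have hint : IntegrableOn (fun z : E => ‖z‖ ^ (-α)) (ball 0 R') μ := by
    rw [integrableOn_fun_norm_addHaar μ (f := fun y : ℝ => y ^ (-α))]
    refine ((intervalIntegral.integrableOn_Ioo_rpow_iff hR').mpr
      (by linarith : -1 < (Module.finrank ℝ E : ℝ) - 1 - α)).congr_fun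
      (fun y (hy : y ∈ Ioo 0 R') => ?_) measurableSet_Ioo
    rw [smul_eq_mul, ← Real.rpow_natCast, Nat.cast_sub hdim, Nat.cast_one,
      ← Real.rpow_add hy.1, sub_eq_add_neg _ α]
  calc ∫⁻ z in closedBall (0 : E) R, ENNReal.ofReal ‖z‖ ^ (-α) ∂μ
      ≤ ∫⁻ z in ball (0 : E) R', ENNReal.ofReal ‖z‖ ^ (-α) ∂μ :=
        lintegral_mono_set (closedBall_subset_ball (by linarith [le_abs_self R]))
    -- the integrands differ only at `z = 0`, where `(0 : ℝ≥0∞) ^ (-α) = ⊤` but `(0 : ℝ) ^ (-α) = 0`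
    _ = ∫⁻ z in ball (0 : E) R', ENNReal.ofReal (‖z‖ ^ (-α)) ∂μ :=
        lintegral_congr_ae <| ae_restrict_of_ae <| (μ.ae_ne 0).mono fun z hz =>
          ENNReal.ofReal_rpow_of_pos (norm_pos_iff.mpr hz)
    _ < ⊤ := hint.setLIntegral_lt_top

lemma lintegral_closedBall_norm_rpow_neg_eq (α : ℝ) {R : ℝ} (hR : 0 < R) :
    ∫⁻ z in closedBall (0 : E) R, ENNReal.ofReal ‖z‖ ^ (-α) ∂μ
      = ENNReal.ofReal (R ^ ((Module.finrank ℝ E : ℝ) - α))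
        * ∫⁻ z in closedBall (0 : E) 1, ENNReal.ofReal ‖z‖ ^ (-α) ∂μ := by
  set d := Module.finrank ℝ E
  have hμ : μ = ENNReal.ofReal (R ^ d) • Measure.map (R • ·) μ := by
    rw [Measure.map_addHaar_smul μ hR.ne', smul_smul, ← ENNReal.ofReal_mul (by positivity),
      abs_of_pos (by positivity), mul_inv_cancel₀ (by positivity), ENNReal.ofReal_one, one_smul]
  have hpre : (R • · : E → E) ⁻¹' closedBall 0 R = closedBall 0 1 := by
    ext w
    simp only [mem_preimage, mem_closedBall_zero_iff, norm_smul, Real.norm_of_nonneg hR.le]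
    exact mul_le_iff_le_one_right hR
  have hscale : ∀ w : E, ENNReal.ofReal ‖R • w‖ ^ (-α)
      = ENNReal.ofReal R ^ (-α) * ENNReal.ofReal ‖w‖ ^ (-α) := fun w => by
    rw [norm_smul, Real.norm_of_nonneg hR.le, ENNReal.ofReal_mul hR.le,
      ENNReal.mul_rpow_of_ne_top ENNReal.ofReal_ne_top ENNReal.ofReal_ne_top]
  conv_lhs => rw [hμ]
  rw [Measure.restrict_smul, lintegral_smul_measure,
    setLIntegral_map measurableSet_closedBall (by fun_prop) (measurable_const_smul R), hpre]
  simp_rw [hscale]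
  rw [lintegral_const_mul' _ _
      (ENNReal.rpow_ne_top_of_ne_zero (by simpa using hR) ENNReal.ofReal_ne_top),
    smul_eq_mul, ← mul_assoc, ENNReal.ofReal_rpow_of_pos hR, ← ENNReal.ofReal_mul (by positivity),
    ← Real.rpow_natCast, ← Real.rpow_add hR, ← sub_eq_add_neg]

lemma lintegral_closedBall_lintegral_closedBall_norm_sub_rpow_neg_le (α : ℝ) {r : ℝ}
    (hr : 0 < r) :
    ∫⁻ x in closedBall (0 : E) r, ∫⁻ y in closedBall (0 : E) r, ENNReal.ofReal ‖x - y‖ ^ (-α) ∂μ ∂μ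
      ≤ μ (closedBall 0 r) * ENNReal.ofReal ((2 * r) ^ ((Module.finrank ℝ E : ℝ) - α))
        * ∫⁻ z in closedBall (0 : E) 1, ENNReal.ofReal ‖z‖ ^ (-α) ∂μ := by
  calc ∫⁻ x in closedBall (0 : E) r, ∫⁻ y in closedBall (0 : E) r,
        ENNReal.ofReal ‖x - y‖ ^ (-α) ∂μ ∂μ
      ≤ ∫⁻ _ in closedBall (0 : E) r, ∫⁻ z in closedBall (0 : E) (2 * r),
          ENNReal.ofReal ‖z‖ ^ (-α) ∂μ ∂μ :=
        setLIntegral_mono' measurableSet_closedBall fun x hx =>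
          setLIntegral_closedBall_comp_sub_le (fun z => ENNReal.ofReal ‖z‖ ^ (-α))
            (mem_closedBall_zero_iff.mp hx)
    _ = _ := by
        rw [setLIntegral_const, lintegral_closedBall_norm_rpow_neg_eq μ α (by positivity),
          mul_comm, mul_assoc]

end SingularBall

lemma max_abs_norm_le_eNorm {d : ℕ} (x : V d) : max |x.1| ‖x.2‖ ≤ eNorm x :=
  max_le (Real.abs_le_sqrt (le_add_of_nonneg_right (sq_nonneg _)))
    (abs_norm x.2 ▸ Real.abs_le_sqrt (le_add_of_nonneg_left (sq_nonneg _)))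

lemma ker_sub_le (n : ℕ) {s : ℝ} (hs : 0 ≤ (n : ℝ) + s) {d : ℕ} (x y : V d) :
    ker n s (x - y) ≤ ENNReal.ofReal (max (y.1 - x.1) ‖x.2 - y.2‖) ^ (-((n : ℝ) + s)) := by
  refine ENNReal.rpow_neg_le_rpow_neg (ENNReal.ofReal_le_ofReal ?_) hs
  refine le_trans ?_ (max_abs_norm_le_eNorm (x - y))
  exact max_le_max (by rw [Prod.fst_sub, abs_sub_comm]; exact le_abs_self _) le_rfl

lemma cylinder_inter_strip {d : ℕ} {a b c e r : ℝ} (hac : a ≤ c) (heb : e ≤ b) :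
    {x : V d | x.1 ∈ Icc a b ∧ ‖x.2‖ ≤ r} ∩ {x : V d | x.1 ∈ Icc c e}
      = Icc c e ×ˢ closedBall 0 r := by
  ext ⟨x₁, x₂⟩
  simp only [mem_inter_iff, mem_ofPred_eq, mem_Icc, mem_prod, mem_closedBall_zero_iff]
  constructor
  · rintro ⟨⟨-, h⟩, hx⟩
    exact ⟨hx, h⟩
  · rintro ⟨hx, h⟩
    exact ⟨⟨⟨by linarith [hx.1], by linarith [hx.2]⟩, h⟩, hx⟩

lemma htrans_cylinder {d : ℕ} (τ a b r : ℝ) :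
    htrans τ {x : V d | x.1 ∈ Icc a b ∧ ‖x.2‖ ≤ r}
      = {x : V d | x.1 ∈ Icc (a + τ) (b + τ) ∧ ‖x.2‖ ≤ r} := by
  ext ⟨x₁, x₂⟩
  simp only [htrans, mem_image, mem_ofPred_eq, mem_Icc, Prod.exists, Prod.mk.injEq]
  constructor
  · rintro ⟨y₁, y₂, ⟨⟨h₁, h₂⟩, hy⟩, rfl, rfl⟩
    exact ⟨⟨by linarith, by linarith⟩, hy⟩
  · rintro ⟨⟨h₁, h₂⟩, hx⟩
    exact ⟨x₁ - τ, x₂, ⟨⟨by linarith, by linarith⟩, hx⟩, by ring, rfl⟩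

lemma PiS_cylinder (n : ℕ) (s : ℝ) {d : ℕ} (r : ℝ) :
    PiS n s {x : V d | x.1 ∈ Icc (-(1:ℝ)/2) (1/2) ∧ ‖x.2‖ ≤ r}
      = ∫⁻ x in Icc (1/4 : ℝ) (1/2) ×ˢ closedBall (0 : EuclideanSpace ℝ (Fin d)) r,
          ∫⁻ y in Icc (1/2 : ℝ) (3/4) ×ˢ closedBall 0 r, ker n s (x - y) := by
  rw [PiS, htrans_cylinder, cylinder_inter_strip (by norm_num) (by norm_num),
    cylinder_inter_strip (by norm_num) (by norm_num)]

lemma PiS_cylinder_le_lintegral_closedBall {n : ℕ} {s : ℝ} (hp : 2 < (n : ℝ) + s) {d : ℕ}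
    (r : ℝ) :
    PiS n s {x : V d | x.1 ∈ Icc (-(1:ℝ)/2) (1/2) ∧ ‖x.2‖ ≤ r}
      ≤ ENNReal.ofReal ((n + s) / (n + s - 2))
        * ∫⁻ x in closedBall (0 : EuclideanSpace ℝ (Fin d)) r, ∫⁻ y in closedBall 0 r,
            ENNReal.ofReal ‖x - y‖ ^ (-((n : ℝ) + s - 2)) := by
  set p : ℝ := n + s
  set B := closedBall (0 : EuclideanSpace ℝ (Fin d)) r
  rw [PiS_cylinder, ← lintegral_const_mul' _ _ ENNReal.ofReal_ne_top]
  calc ∫⁻ x in Icc (1/4 : ℝ) (1/2) ×ˢ B, ∫⁻ y in Icc (1/2 : ℝ) (3/4) ×ˢ B, ker n s (x - y)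
      ≤ ∫⁻ x in Icc (1/4 : ℝ) (1/2) ×ˢ B, ∫⁻ y in Icc (1/2 : ℝ) (3/4) ×ˢ B,
          ENNReal.ofReal (max (y.1 - x.1) ‖x.2 - y.2‖) ^ (-p) :=
        lintegral_mono fun x => lintegral_mono fun y => ker_sub_le n (by linarith) x y
    _ = ∫⁻ x₂ in B, ∫⁻ y₂ in B, ∫⁻ x₁ in Icc (1/4 : ℝ) (1/2), ∫⁻ y₁ in Icc (1/2 : ℝ) (3/4),
          ENNReal.ofReal (max (y₁ - x₁) ‖x₂ - y₂‖) ^ (-p) := by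
        rw [Measure.volume_eq_prod, ← Measure.prod_restrict, ← Measure.prod_restrict]
        exact lintegral_prod_lintegral_prod_eq (by fun_prop)
    _ ≤ ∫⁻ x₂ in B, ENNReal.ofReal (p / (p - 2))
          * ∫⁻ y₂ in B, ENNReal.ofReal ‖x₂ - y₂‖ ^ (-(p - 2)) := by
        refine lintegral_mono fun x₂ => ?_
        rw [← lintegral_const_mul' _ _ ENNReal.ofReal_ne_top]
        refine lintegral_mono fun y₂ => ?_
        calc _ ≤ ∫⁻ x₁ in Iic (1/2 : ℝ), ∫⁻ y₁ in Ici (1/2 : ℝ),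
                ENNReal.ofReal (max (y₁ - x₁) ‖x₂ - y₂‖) ^ (-p) :=
              (lintegral_mono fun _ => lintegral_mono_set Icc_subset_Ici_self).trans
                (lintegral_mono_set Icc_subset_Iic_self)
          _ ≤ _ := lintegral_Iic_lintegral_Ici_max_rpow_neg_le hp (norm_nonneg _) _

lemma PiS_cylinder_le {n : ℕ} (hn : 2 ≤ n) {s : ℝ} (hs : s ∈ Ioo (0:ℝ) 1) :
    ∃ K : ℝ≥0∞, K ≠ ⊤ ∧ ∀ r : ℝ, 0 < r →
      PiS n s {x : V (n-1) | x.1 ∈ Icc (-(1:ℝ)/2) (1/2) ∧ ‖x.2‖ ≤ r}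
        ≤ K * ENNReal.ofReal (r ^ ((n:ℝ) - s)) := by
  set E := EuclideanSpace ℝ (Fin (n - 1))
  have : Nonempty (Fin (n - 1)) := ⟨⟨0, by omega⟩⟩
  have hdim : (Module.finrank ℝ E : ℝ) = n - 1 := by
    rw [finrank_euclideanSpace_fin, Nat.cast_sub (by omega), Nat.cast_one]
  have hn' : (2 : ℝ) ≤ n := by exact_mod_cast hn
  set α : ℝ := n + s - 2
  set I := ∫⁻ z in closedBall (0 : E) 1, ENNReal.ofReal ‖z‖ ^ (-α)
  have hI : I ≠ ⊤ :=
    (lintegral_closedBall_norm_rpow_neg_lt_top volume (by rw [hdim]; linarith [hs.2]) 1).ne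
  refine ⟨ENNReal.ofReal ((n + s) / (n + s - 2))
    * (volume (closedBall (0 : E) 1) * ENNReal.ofReal (2 ^ (1 - s)) * I),
    ENNReal.mul_ne_top ENNReal.ofReal_ne_top (ENNReal.mul_ne_top
      (ENNReal.mul_ne_top measure_closedBall_lt_top.ne ENNReal.ofReal_ne_top) hI),
    fun r hr => ?_⟩
  have hpow : r ^ Module.finrank ℝ E * (2 * r) ^ ((Module.finrank ℝ E : ℝ) - α)
      = 2 ^ (1 - s) * r ^ ((n : ℝ) - s) := by
    rw [hdim, show (n : ℝ) - 1 - α = 1 - s by ring, Real.mul_rpow zero_le_two hr.le,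
      ← Real.rpow_natCast, hdim, mul_left_comm, ← Real.rpow_add hr]
    ring_nf
  calc PiS n s {x : V (n-1) | x.1 ∈ Icc (-(1:ℝ)/2) (1/2) ∧ ‖x.2‖ ≤ r}
      ≤ ENNReal.ofReal ((n + s) / (n + s - 2))
          * ∫⁻ x in closedBall (0 : E) r, ∫⁻ y in closedBall 0 r, ENNReal.ofReal ‖x - y‖ ^ (-α) :=
        PiS_cylinder_le_lintegral_closedBall (by linarith [hs.1]) r
    _ ≤ ENNReal.ofReal ((n + s) / (n + s - 2))
          * (volume (closedBall (0 : E) r)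
            * ENNReal.ofReal ((2 * r) ^ ((Module.finrank ℝ E : ℝ) - α)) * I) := by
        gcongr
        exact lintegral_closedBall_lintegral_closedBall_norm_sub_rpow_neg_le volume α hr
    _ = _ := by
        have h := congrArg ENNReal.ofReal hpow
        rw [ENNReal.ofReal_mul (by positivity), ENNReal.ofReal_mul (by positivity)] at h
        rw [Measure.addHaar_closedBall' _ _ hr.le]
        calc _ = ENNReal.ofReal ((n + s) / (n + s - 2)) * (volume (closedBall (0 : E) 1) * I
              * (ENNReal.ofReal (r ^ Module.finrank ℝ E)
                * ENNReal.ofReal ((2 * r) ^ ((Module.finrank ℝ E : ℝ) - α)))) := by ring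
          _ = _ := by rw [h]; ring

theorem thin_cylinder_cross_term (n : ℕ) (hn : 2 ≤ n) (s : ℝ) (hs : s ∈ Set.Ioo (0:ℝ) 1) :
    ∃ C > (0:ℝ), ∀ r : ℝ, r ∈ Set.Ioo (0:ℝ) (1/4) →
      PiS n s {x : V (n-1) | x.1 ∈ Icc (-(1:ℝ)/2) (1/2) ∧ ‖x.2‖ ≤ r}
        ≤ ENNReal.ofReal (C * r ^ ((n:ℝ) - s)) := by
  obtain ⟨K, hK, hPiS⟩ := PiS_cylinder_le hn hs
  refine ⟨K.toReal + 1, by positivity, fun r hr => ?_⟩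
  exact (hPiS r hr.1).trans (ENNReal.mul_ofReal_le_ofReal_toReal_add_one_mul hK _)
end
end

section
/- For X, Y > 0 and n ≥ 3, the integral ∫_0^{√19/10} R^{n-3} (X^2 + Y^2 R^2)^{-(n+s)/2} dR is bounded below by c X^{-(n+s)} min{(X/Y)^{n-2}, 1} for some constant c > 0 depending only on n and s. -/
open MeasureTheory Set
open scoped ENNReal Classical

noncomputable section

/-! On `[0, b]` with `b = min (√19/10) (X/Y)` one has `Y²R² ≤ X²`, so the integrand is at least
`(2X²)^{-(n+s)/2} R^{n-3}`, whose integral over `[0, b]` is `(2X²)^{-(n+s)/2} b^{n-2}/(n-2)`.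
Since `√19/10 ≤ 1`, `b ≥ (√19/10) · min (X/Y) 1`, which gives the factor `min ((X/Y)^{n-2}) 1`. -/

lemma sqrt_nineteen_div_ten_le_one : Real.sqrt 19 / 10 ≤ 1 := by
  rw [div_le_one (by norm_num), Real.sqrt_le_left (by norm_num)]
  norm_num

lemma mul_min_one_le_min {a t : ℝ} (ha₀ : 0 ≤ a) (ha₁ : a ≤ 1) (ht : 0 ≤ t) :
    a * min t 1 ≤ min a t :=
  le_min (mul_le_of_le_one_right ha₀ (min_le_right t 1))
    ((mul_le_of_le_one_left (le_min ht zero_le_one) ha₁).trans (min_le_left t 1))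

lemma min_pow_one {t : ℝ} (ht : 0 ≤ t) (k : ℕ) : min (t ^ k) 1 = min t 1 ^ k := by
  rcases le_total t 1 with h | h
  · rw [min_eq_left (pow_le_one₀ ht h), min_eq_left h]
  · rw [min_eq_right (one_le_pow₀ h), min_eq_right h, one_pow]

lemma two_mul_sq_rpow_neg_le_of_mul_le {p X Y R : ℝ} (hp : 0 ≤ p) (hX : 0 < X) (hY : 0 ≤ Y)
    (hR : 0 ≤ R) (hYR : Y * R ≤ X) :
    (2 * X ^ 2) ^ (-p / 2) ≤ (X ^ 2 + Y ^ 2 * R ^ 2) ^ (-p / 2) := by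
  have hsq : (Y * R) ^ 2 ≤ X ^ 2 := pow_le_pow_left₀ (mul_nonneg hY hR) hYR 2
  exact Real.rpow_le_rpow_of_nonpos (by positivity) (by nlinarith) (by linarith)

lemma two_mul_sq_rpow_neg_half {X : ℝ} (hX : 0 ≤ X) (p : ℝ) :
    (2 * X ^ 2) ^ (-p / 2) = 2 ^ (-p / 2) * X ^ (-p) := by
  rw [Real.mul_rpow zero_le_two (by positivity), ← Real.rpow_natCast X 2, ← Real.rpow_mul hX]
  congr 2
  ring

lemma le_integral_pow_mul_rpow_neg (m : ℕ) {p X Y a b : ℝ} (hp : 0 ≤ p) (hX : 0 < X)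
    (hY : 0 ≤ Y) (hb : 0 ≤ b) (hba : b ≤ a) (hYb : Y * b ≤ X) :
    (2 * X ^ 2) ^ (-p / 2) * (b ^ (m + 1) / (m + 1))
      ≤ ∫ R in (0:ℝ)..a, R ^ m * (X ^ 2 + Y ^ 2 * R ^ 2) ^ (-p / 2) := by
  have hcont : Continuous fun R : ℝ => R ^ m * (X ^ 2 + Y ^ 2 * R ^ 2) ^ (-p / 2) :=
    (continuous_pow m).mul <|
      (continuous_const.add (continuous_const.mul (continuous_pow 2))).rpow_const fun R =>
        Or.inl (add_pos_of_pos_of_nonneg (pow_pos hX 2) (by positivity : (0:ℝ) ≤ Y ^ 2 * R ^ 2)).ne'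
  calc (2 * X ^ 2) ^ (-p / 2) * (b ^ (m + 1) / (m + 1))
      = ∫ R in (0:ℝ)..b, (2 * X ^ 2) ^ (-p / 2) * R ^ m := by
        rw [intervalIntegral.integral_const_mul, integral_pow]
        norm_num
    _ ≤ ∫ R in (0:ℝ)..b, R ^ m * (X ^ 2 + Y ^ 2 * R ^ 2) ^ (-p / 2) := by
        refine intervalIntegral.integral_mono_on hb
          (Continuous.intervalIntegrable (by fun_prop) _ _) (hcont.intervalIntegrable _ _)
          fun R hR => ?_
        rw [mul_comm]
        have hYR : Y * R ≤ X := (mul_le_mul_of_nonneg_left hR.2 hY).trans hYb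
        exact mul_le_mul_of_nonneg_left (two_mul_sq_rpow_neg_le_of_mul_le hp hX hY hR.1 hYR)
          (pow_nonneg hR.1 m)
    _ ≤ ∫ R in (0:ℝ)..a, R ^ m * (X ^ 2 + Y ^ 2 * R ^ 2) ^ (-p / 2) := by
        refine intervalIntegral.integral_mono_interval le_rfl hb hba ?_
          (hcont.intervalIntegrable _ _)
        filter_upwards [ae_restrict_mem measurableSet_Ioc] with R hR
        have := hR.1.le
        positivity

theorem radial_integral_lower_bound (n : ℕ) (hn : 3 ≤ n) (s : ℝ) (hs : s ∈ Set.Ioo (0:ℝ) 1) :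
    ∃ c > (0:ℝ), ∀ X Y : ℝ, 0 < X → 0 < Y →
      c * X ^ (-((n:ℝ) + s)) * min ((X / Y) ^ ((n:ℝ) - 2)) 1
        ≤ ∫ R in (0:ℝ)..(Real.sqrt 19 / 10),
            R ^ ((n:ℝ) - 3) * (X ^ 2 + Y ^ 2 * R ^ 2) ^ (-((n:ℝ) + s) / 2) := by
  obtain ⟨m, rfl⟩ := Nat.exists_eq_add_of_le hn
  set a := Real.sqrt 19 / 10
  have ha : 0 < a := by positivity
  have hp : 0 ≤ ((3 + m : ℕ) : ℝ) + s := add_nonneg (Nat.cast_nonneg _) hs.1.le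
  refine ⟨2 ^ (-(((3 + m : ℕ) : ℝ) + s) / 2) * a ^ (m + 1) / (m + 1), by positivity,
    fun X Y hX hY => ?_⟩
  have hb : a * min (X / Y) 1 ≤ min a (X / Y) :=
    mul_min_one_le_min ha.le sqrt_nineteen_div_ten_le_one (by positivity)
  have hYb : Y * min a (X / Y) ≤ X :=
    (mul_le_mul_of_nonneg_left (min_le_right _ _) hY.le).trans (mul_div_cancel₀ X hY.ne').le
  have hlower := le_integral_pow_mul_rpow_neg m hp hX hY.le (by positivity) (min_le_left _ _) hYb
  have hexp₃ : ((3 + m : ℕ) : ℝ) - 3 = (m : ℕ) := by push_cast; ring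
  have hexp₂ : ((3 + m : ℕ) : ℝ) - 2 = (m + 1 : ℕ) := by push_cast; ring
  simp only [hexp₃, hexp₂, Real.rpow_natCast, min_pow_one (div_pos hX hY).le,
    two_mul_sq_rpow_neg_half hX.le] at hlower ⊢
  calc _ = 2 ^ (-(((3 + m : ℕ) : ℝ) + s) / 2) * X ^ (-(((3 + m : ℕ) : ℝ) + s))
        * ((a * min (X / Y) 1) ^ (m + 1) / (m + 1)) := by ring
    _ ≤ _ := by gcongr
    _ ≤ _ := hlower
end
end

section
/- Uniform L^∞ energy bound implies L^1 convergence of f_k^{n-1}: Suppose f_k : [0,1/2] → [0,+∞] are decreasing, ∫_0^{1/2} f_k^{n-1} = C_2 for all k, and there exist C_⋆ > 1 such that for all M ≥ C_⋆ and all k, ∫_0^{ε_k(M)} f_k^{n-1}(x_1) dx_1 ≤ C_⋆ M^{-s(n-1)}, where ε_k(M) := inf{r : f_k(r) < M}. If moreover f_k → f almost everywhere on (0,1/2), then f_k^{n-1} → f^{n-1} in L^1(0,1/2), and in particular ∫_0^{1/2} f^{n-1} = C_2. -/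
/-!
Write `g_k = f_k^{n-1}` and `g = f^{n-1}`. Truncating at a level `L` bounds `|g_k - g|` by
`|min g_k L - min g L|`, which tends to `0` in `L¹` by dominated convergence, plus the tails
`(g_k - L)₊ + (g - L)₊`. Since `f_k` is decreasing, `f_k < M` to the right of `ε_k(M)`, so the
tail of `g_k` above `M^{n-1}` is at most `∫_0^{ε_k(M)} g_k ≤ C_⋆ M^{-s(n-1)}`, uniformly in `k`,
and Fatou's lemma carries this bound over to `g`. Hence `g_k → g` in `L¹`, and the energy
`C_2` passes to the limit.
-/

open MeasureTheory Set
open scoped ENNReal Classical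

noncomputable section

open Filter Topology

theorem tsub_add_tsub_le_min_add_tsub {α : Type*} [AddCommMonoid α] [LinearOrder α]
    [CanonicallyOrderedAdd α] [Sub α] [OrderedSub α] (a b L : α) :
    (a - b) + (b - a) ≤
      ((min a L - min b L) + (min b L - min a L)) + ((a - L) + (b - L)) := by
  have key : ∀ x y : α, x - y ≤ (min x L - min y L) + (x - L) := fun x y =>
    calc x - y ≤ (x - min x L) + (min x L - y) := tsub_le_tsub_add_tsub
      _ ≤ (x - L) + (min x L - min y L) :=
        add_le_add (tsub_min (b := L)).le (tsub_le_tsub_left (min_le_left y L) _)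
      _ = (min x L - min y L) + (x - L) := add_comm _ _
  calc (a - b) + (b - a)
      ≤ ((min a L - min b L) + (a - L)) + ((min b L - min a L) + (b - L)) :=
        add_le_add (key a b) (key b a)
    _ = _ := add_add_add_comm _ _ _ _

section
variable {α : Type*} [MeasurableSpace α] {μ : Measure α}
  {g : ℕ → α → ℝ≥0∞} {G : α → ℝ≥0∞}

theorem tendsto_lintegral_min_dist_of_tendsto_ae [IsFiniteMeasure μ]
    (hg : ∀ k, AEMeasurable (g k) μ) (hG : AEMeasurable G μ)
    (hlim : ∀ᵐ x ∂μ, Tendsto (fun k => g k x) atTop (𝓝 (G x))) {L : ℝ≥0∞} (hL : L ≠ ∞) :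
    Tendsto (fun k => ∫⁻ x, (min (g k x) L - min (G x) L) + (min (G x) L - min (g k x) L) ∂μ)
      atTop (𝓝 0) := by
  have hmin : ∀ k, AEMeasurable (fun x => min (g k x) L) μ :=
    fun k => (hg k).min aemeasurable_const
  have hGmin : AEMeasurable (fun x => min (G x) L) μ := hG.min aemeasurable_const
  have hbound : ∀ k, (fun x => (min (g k x) L - min (G x) L) + (min (G x) L - min (g k x) L))
      ≤ᵐ[μ] fun _ => L + L := fun k => ae_of_all _ fun x =>
    add_le_add (tsub_le_self.trans (min_le_right _ _)) (tsub_le_self.trans (min_le_right _ _))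
  have hpointwise : ∀ᵐ x ∂μ, Tendsto
      (fun k => (min (g k x) L - min (G x) L) + (min (G x) L - min (g k x) L)) atTop (𝓝 0) := by
    filter_upwards [hlim] with x hx
    have hmin_lim := hx.min (tendsto_const_nhds (x := L))
    have hfin : min (G x) L ≠ ∞ := ne_top_of_le_ne_top hL (min_le_right _ _)
    simpa using (ENNReal.Tendsto.sub hmin_lim tendsto_const_nhds (Or.inr hfin)).add
      (ENNReal.Tendsto.sub (tendsto_const_nhds (x := min (G x) L)) hmin_lim (Or.inr hfin))
  simpa using tendsto_lintegral_of_dominated_convergence' _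
    (fun k => ((hmin k).sub hGmin).add (hGmin.sub (hmin k))) hbound
    (by simpa using ENNReal.mul_ne_top (ENNReal.add_ne_top.2 ⟨hL, hL⟩) (measure_ne_top μ univ))
    hpointwise

theorem lintegral_tsub_le_of_tendsto_ae (hg : ∀ k, AEMeasurable (g k) μ)
    (hlim : ∀ᵐ x ∂μ, Tendsto (fun k => g k x) atTop (𝓝 (G x))) {L δ : ℝ≥0∞} (hL : L ≠ ∞)
    (htail : ∀ k, ∫⁻ x, (g k x - L) ∂μ ≤ δ) :
    ∫⁻ x, (G x - L) ∂μ ≤ δ :=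
  calc ∫⁻ x, (G x - L) ∂μ = ∫⁻ x, liminf (fun k => g k x - L) atTop ∂μ :=
        lintegral_congr_ae <| hlim.mono fun _ hx =>
          (ENNReal.Tendsto.sub hx tendsto_const_nhds (Or.inr hL)).liminf_eq.symm
    _ ≤ liminf (fun k => ∫⁻ x, (g k x - L) ∂μ) atTop :=
        lintegral_liminf_le' fun k => (hg k).sub aemeasurable_const
    _ ≤ δ := liminf_le_of_frequently_le' (Frequently.of_forall htail)

theorem tendsto_lintegral_dist_of_tendsto_ae [IsFiniteMeasure μ]
    (hg : ∀ k, AEMeasurable (g k) μ)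
    (hlim : ∀ᵐ x ∂μ, Tendsto (fun k => g k x) atTop (𝓝 (G x)))
    (htail : ∀ ε > 0, ∃ L ≠ ∞, ∀ k, ∫⁻ x, (g k x - L) ∂μ ≤ ε) :
    Tendsto (fun k => ∫⁻ x, (g k x - G x) + (G x - g k x) ∂μ) atTop (𝓝 0) := by
  have hG : AEMeasurable G μ := aemeasurable_of_tendsto_metrizable_ae' hg hlim
  rw [ENNReal.tendsto_nhds_zero]
  intro ε hε
  obtain ⟨L, hL, hgL⟩ := htail (ε / 2 / 2) (ENNReal.half_pos (ENNReal.half_pos hε.ne').ne')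
  have hGL := lintegral_tsub_le_of_tendsto_ae hg hlim hL hgL
  filter_upwards [(ENNReal.tendsto_nhds_zero.1
    (tendsto_lintegral_min_dist_of_tendsto_ae hg hG hlim hL)) (ε / 2)
    (ENNReal.half_pos hε.ne')] with k hk
  calc ∫⁻ x, (g k x - G x) + (G x - g k x) ∂μ
      ≤ ∫⁻ x, ((min (g k x) L - min (G x) L) + (min (G x) L - min (g k x) L))
          + ((g k x - L) + (G x - L)) ∂μ :=
        lintegral_mono fun x => tsub_add_tsub_le_min_add_tsub _ _ _
    _ = (∫⁻ x, (min (g k x) L - min (G x) L) + (min (G x) L - min (g k x) L) ∂μ)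
          + ((∫⁻ x, (g k x - L) ∂μ) + ∫⁻ x, (G x - L) ∂μ) := by
        have hgk := hg k
        rw [lintegral_add_left' (f := fun x => (min (g k x) L - min (G x) L)
          + (min (G x) L - min (g k x) L)) (by fun_prop),
          lintegral_add_left' (f := fun x => g k x - L) (by fun_prop)]
    _ ≤ ε / 2 + (ε / 2 / 2 + ε / 2 / 2) := add_le_add hk (add_le_add (hgL k) hGL)
    _ = ε := by rw [ENNReal.add_halves, ENNReal.add_halves]

theorem lintegral_eq_of_tendsto_lintegral_dist (hg : ∀ k, AEMeasurable (g k) μ)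
    (hG : AEMeasurable G μ)
    (hdist : Tendsto (fun k => ∫⁻ x, (g k x - G x) + (G x - g k x) ∂μ) atTop (𝓝 0))
    {c : ℝ≥0∞} (hc : ∀ k, ∫⁻ x, g k x ∂μ = c) :
    ∫⁻ x, G x ∂μ = c := by
  have hle : ∀ {u v : α → ℝ≥0∞}, AEMeasurable u μ → ∀ d : α → ℝ≥0∞,
      (∀ x, v x ≤ u x + d x) → ∫⁻ x, v x ∂μ ≤ ∫⁻ x, u x ∂μ + ∫⁻ x, d x ∂μ :=
    fun hu d hvu => (lintegral_mono hvu).trans (lintegral_add_left' hu d).le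
  have hlim : ∀ I : ℝ≥0∞,
      Tendsto (fun k => I + ∫⁻ x, (g k x - G x) + (G x - g k x) ∂μ) atTop (𝓝 I) :=
    fun I => by simpa using hdist.const_add I
  refine le_antisymm (ge_of_tendsto (hlim c) (Eventually.of_forall fun k => ?_))
    (ge_of_tendsto (hlim _) (Eventually.of_forall fun k => ?_))
  · rw [← hc k]
    exact hle (hg k) _ fun x => le_add_tsub.trans (add_le_add le_rfl le_add_self)
  · rw [← hc k]
    exact hle hG _ fun x => le_add_tsub.trans (add_le_add le_rfl le_self_add)

end

theorem AntitoneOn.lt_of_csInf_lt {β : Type*} [Preorder β] {f : ℝ → β} {a b : ℝ} {M : β}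
    (hf : AntitoneOn f (Icc a b)) (hne : ∃ r ∈ Icc a b, f r < M) {x : ℝ}
    (hx : x ∈ Ioc (sInf {r | r ∈ Icc a b ∧ f r < M}) b) : f x < M := by
  obtain ⟨r, ⟨hr, hrM⟩, hrx⟩ := exists_lt_of_csInf_lt hne hx.1
  exact (hf hr ⟨hr.1.trans hrx.le, hx.2⟩ hrx.le).trans_lt hrM

theorem setLIntegral_Ioc_tsub_le {μ : Measure ℝ} {h : ℝ → ℝ≥0∞} {a b ε : ℝ} {L : ℝ≥0∞}
    (hL : ∀ x ∈ Ioc ε b, h x ≤ L) :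
    ∫⁻ x in Ioc a b, (h x - L) ∂μ ≤ ∫⁻ x in Ioc a ε, h x ∂μ :=
  calc ∫⁻ x in Ioc a b, (h x - L) ∂μ ≤ ∫⁻ x in Ioc a ε ∪ Ioc ε b, (h x - L) ∂μ :=
        lintegral_mono_set fun x hx =>
          (le_or_gt x ε).imp (fun hxε => ⟨hx.1, hxε⟩) (fun hxε => ⟨hxε, hx.2⟩)
    _ ≤ ∫⁻ x in Ioc a ε, (h x - L) ∂μ + ∫⁻ x in Ioc ε b, (h x - L) ∂μ :=
        lintegral_union_le _ _ _
    _ ≤ ∫⁻ x in Ioc a ε, h x ∂μ + ∫⁻ _ in Ioc ε b, 0 ∂μ :=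
        add_le_add (lintegral_mono fun _ => tsub_le_self)
          (setLIntegral_mono' measurableSet_Ioc fun x hx => (tsub_eq_zero_of_le (hL x hx)).le)
    _ = ∫⁻ x in Ioc a ε, h x ∂μ := by simp

theorem exists_lt_of_setLIntegral_lt {α : Type*} [MeasurableSpace α] {μ : Measure α}
    {s : Set α} (hs : MeasurableSet s) {h : α → ℝ≥0∞} {L : ℝ≥0∞}
    (hlt : ∫⁻ x in s, h x ∂μ < L * μ s) : ∃ x ∈ s, h x < L := by
  by_contra! hge
  exact hlt.not_ge (by simpa [setLIntegral_const] using setLIntegral_mono' hs hge)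

theorem setLIntegral_rpow_tsub_le_of_antitoneOn {f : ℝ → ℝ≥0∞} {a b p : ℝ} (hp : 0 ≤ p)
    (hf : AntitoneOn f (Icc a b)) {M : ℝ≥0∞}
    (hlt : ∫⁻ x in Ioc a b, f x ^ p < M ^ p * volume (Ioc a b)) :
    ∫⁻ x in Ioc a b, (f x ^ p - M ^ p) ≤
      ∫⁻ x in Ioc a (sInf {r | r ∈ Icc a b ∧ f r < M}), f x ^ p := by
  -- `hlt` makes the set below nonempty, so its `sInf` is not the junk value `sInf ∅ = 0`.
  obtain ⟨r, hr, hrM⟩ := exists_lt_of_setLIntegral_lt measurableSet_Ioc hlt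
  have hne : ∃ r ∈ Icc a b, f r < M :=
    ⟨r, Ioc_subset_Icc_self hr, lt_of_not_ge fun h => hrM.not_ge (ENNReal.rpow_le_rpow h hp)⟩
  exact setLIntegral_Ioc_tsub_le fun x hx =>
    ENNReal.rpow_le_rpow (hf.lt_of_csInf_lt hne hx).le hp

theorem exists_uniform_tail_of_antitoneOn {f : ℕ → ℝ → ℝ≥0∞} {a b p C : ℝ} {c : ℝ≥0∞}
    {δ : ℝ → ℝ≥0∞} (hab : a < b) (hp : 0 < p) (hc : c ≠ ∞)
    (hmono : ∀ k, AntitoneOn (f k) (Icc a b)) (hvol : ∀ k, ∫⁻ x in Ioc a b, f k x ^ p ≤ c)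
    (hbound : ∀ M : ℝ, C ≤ M → ∀ k,
      ∫⁻ x in Ioc a (sInf {r | r ∈ Icc a b ∧ f k r < ENNReal.ofReal M}), f k x ^ p ≤ δ M)
    (hδ : Tendsto δ atTop (𝓝 0)) :
    ∀ ε > 0, ∃ L ≠ ∞, ∀ k, ∫⁻ x in Ioc a b, (f k x ^ p - L) ≤ ε := by
  intro ε hε
  have hlarge : Tendsto (fun M : ℝ => ENNReal.ofReal M ^ p * volume (Ioc a b)) atTop (𝓝 ∞) := by
    have := ENNReal.Tendsto.mul_const (b := volume (Ioc a b))
      ((ENNReal.continuous_rpow_const.tendsto ∞).comp ENNReal.tendsto_ofReal_atTop)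
      (Or.inl (by rw [ENNReal.top_rpow_of_pos hp]; exact ENNReal.top_ne_zero))
    simpa [ENNReal.top_rpow_of_pos hp, hab] using this
  obtain ⟨M, hMC, hMlarge, hMε⟩ := ((eventually_ge_atTop C).and
    ((hlarge.eventually_const_lt hc.lt_top).and (hδ.eventually_lt_const hε))).exists
  refine ⟨ENNReal.ofReal M ^ p, ENNReal.rpow_ne_top_of_nonneg hp.le ENNReal.ofReal_ne_top,
    fun k => ?_⟩
  calc ∫⁻ x in Ioc a b, (f k x ^ p - ENNReal.ofReal M ^ p)
      ≤ ∫⁻ x in Ioc a (sInf {r | r ∈ Icc a b ∧ f k r < ENNReal.ofReal M}), f k x ^ p :=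
        setLIntegral_rpow_tsub_le_of_antitoneOn hp.le (hmono k) ((hvol k).trans_lt hMlarge)
    _ ≤ ε := (hbound M hMC k).trans hMε.le

theorem L1_convergence_general (n : ℕ) (hn : 2 ≤ n) (s : ℝ) (hs : s ∈ Set.Ioo (0:ℝ) 1)
    (C₂ Cstar : ℝ)
    (f : ℕ → ℝ → ℝ≥0∞) (flim : ℝ → ℝ≥0∞)
    (hmono : ∀ k, AntitoneOn (f k) (Icc 0 (1/2)))
    (hvol : ∀ k, ∫⁻ x in Ioc (0:ℝ) (1/2), (f k x) ^ ((n:ℝ) - 1) = ENNReal.ofReal C₂)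
    (hbound : ∀ M : ℝ, Cstar ≤ M → ∀ k,
      ∫⁻ x in Ioc (0:ℝ) (sInf {r : ℝ | r ∈ Icc 0 (1/2) ∧ f k r < ENNReal.ofReal M}),
          (f k x) ^ ((n:ℝ) - 1)
        ≤ ENNReal.ofReal (Cstar * M ^ (-(s * ((n:ℝ) - 1)))))
    (hae : ∀ᵐ x ∂(volume.restrict (Ioc (0:ℝ) (1/2))),
      Filter.Tendsto (fun k => f k x) Filter.atTop (nhds (flim x))) :
    Filter.Tendsto
        (fun k => ∫⁻ x in Ioc (0:ℝ) (1/2),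
          ((f k x) ^ ((n:ℝ) - 1) - (flim x) ^ ((n:ℝ) - 1)) +
            ((flim x) ^ ((n:ℝ) - 1) - (f k x) ^ ((n:ℝ) - 1)))
        Filter.atTop (nhds 0) ∧
      ∫⁻ x in Ioc (0:ℝ) (1/2), (flim x) ^ ((n:ℝ) - 1) = ENNReal.ofReal C₂ := by
  set p : ℝ := (n:ℝ) - 1
  have hp : 0 < p := by
    have : (2:ℝ) ≤ n := by exact_mod_cast hn
    linarith
  have hg : ∀ k, AEMeasurable (fun x => f k x ^ p) (volume.restrict (Ioc (0:ℝ) (1/2))) :=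
    fun k => (aemeasurable_restrict_of_antitoneOn measurableSet_Ioc
      ((hmono k).mono Ioc_subset_Icc_self)).pow_const p
  have hlim : ∀ᵐ x ∂(volume.restrict (Ioc (0:ℝ) (1/2))),
      Tendsto (fun k => f k x ^ p) atTop (𝓝 (flim x ^ p)) :=
    hae.mono fun _ hx => (ENNReal.continuous_rpow_const.tendsto _).comp hx
  have hdecay : Tendsto (fun M : ℝ => ENNReal.ofReal (Cstar * M ^ (-(s * p)))) atTop (𝓝 0) := by
    simpa using ENNReal.tendsto_ofReal
      ((tendsto_rpow_neg_atTop (mul_pos hs.1 hp)).const_mul Cstar)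
  have hdist := tendsto_lintegral_dist_of_tendsto_ae hg hlim
    (exists_uniform_tail_of_antitoneOn (by norm_num) hp ENNReal.ofReal_ne_top hmono
      (fun k => (hvol k).le) hbound hdecay)
  exact ⟨hdist, lintegral_eq_of_tendsto_lintegral_dist hg
    (aemeasurable_of_tendsto_metrizable_ae' hg hlim) hdist hvol⟩

theorem L1_convergence (n : ℕ) (hn : 2 ≤ n) (s : ℝ) (hs : s ∈ Set.Ioo (0:ℝ) 1)
    (C₂ Cstar : ℝ) (hC₂ : 0 < C₂) (hCstar : 1 < Cstar)
    (f : ℕ → ℝ → ℝ≥0∞) (flim : ℝ → ℝ≥0∞)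
    (hmono : ∀ k, AntitoneOn (f k) (Icc 0 (1/2)))
    (hvol : ∀ k, ∫⁻ x in Ioc (0:ℝ) (1/2), (f k x) ^ ((n:ℝ) - 1) = ENNReal.ofReal C₂)
    (hbound : ∀ M : ℝ, Cstar ≤ M → ∀ k,
      ∫⁻ x in Ioc (0:ℝ) (sInf {r : ℝ | r ∈ Icc 0 (1/2) ∧ f k r < ENNReal.ofReal M}),
          (f k x) ^ ((n:ℝ) - 1)
        ≤ ENNReal.ofReal (Cstar * M ^ (-(s * ((n:ℝ) - 1)))))
    (hae : ∀ᵐ x ∂(volume.restrict (Ioc (0:ℝ) (1/2))),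
      Filter.Tendsto (fun k => f k x) Filter.atTop (nhds (flim x))) :
    Filter.Tendsto
        (fun k => ∫⁻ x in Ioc (0:ℝ) (1/2),
          ((f k x) ^ ((n:ℝ) - 1) - (flim x) ^ ((n:ℝ) - 1)) +
            ((flim x) ^ ((n:ℝ) - 1) - (f k x) ^ ((n:ℝ) - 1)))
        Filter.atTop (nhds 0) ∧
      ∫⁻ x in Ioc (0:ℝ) (1/2), (flim x) ^ ((n:ℝ) - 1) = ENNReal.ofReal C₂ :=
  L1_convergence_general n hn s hs C₂ Cstar f flim hmono hvol hbound hae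
end
end
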